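/- arXiv:1107.3955 — 7 statements merged into one kernel-verified Lean document; each statement's English description precedes it below -/
import Mathlib

section
/- Let V be an infinite-dimensional vector space over a field F and let g ∈ GL(V) be unipotent, i.e. (g−1)^k = 0 in End(V) for some k ∈ ℕ. Then the quotient space V/[V,g] is infinite-dimensional, where [V,g] denotes the image of the linear map g−1. -/
/-- If `V` is an infinite-dimensional vector space over a field `F`
and `g ∈ GL(V)` is unipotent (i.e. `(g - 1)^k = 0` in `End(V)` for some `k`), then
`V / [V, g]` is infinite-dimensional, where `[V, g]` is the range of `g - 1`. -/
theorem stmt0 {F V : Type*} [Field F] [AddCommGroup V] [Module F V]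
    (hV : ¬ FiniteDimensional F V) (g : V ≃ₗ[F] V)
    (hg : ∃ k : ℕ, ((g : V →ₗ[F] V) - 1) ^ k = 0) :
    ¬ FiniteDimensional F (V ⧸ LinearMap.range ((g : V →ₗ[F] V) - 1)) := by
  intro hfin
  apply hV
  obtain ⟨k, hk⟩ := hg
  set f : V →ₗ[F] V := (g : V →ₗ[F] V) - 1 with hf
  obtain ⟨s, hs⟩ : (⊤ : Submodule F (V ⧸ LinearMap.range f)).FG :=
    Module.finite_def.mp hfin
  set W : Submodule F V :=
    Submodule.span F (Quotient.out '' (s : Set (V ⧸ LinearMap.range f))) with hW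
  have hWfd : FiniteDimensional F W :=
    FiniteDimensional.span_of_finite F ((s.finite_toSet).image _)
  have hWtop : LinearMap.range f ⊔ W = ⊤ := by
    rw [← Submodule.map_mkQ_eq_top, hW, Submodule.map_span]
    rw [← Set.image_comp]
    have : (⇑(LinearMap.range f).mkQ ∘ Quotient.out) '' (s : Set (V ⧸ LinearMap.range f)) = (s : Set (V ⧸ LinearMap.range f)) := by
      ext x
      simp only [Set.mem_image, Function.comp_apply]
      constructor
      · rintro ⟨y, hy, rfl⟩
        simpa [Submodule.mkQ_apply, ← Submodule.Quotient.mk''_eq_mk, Quotient.out_eq'] using hy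
      · intro hx
        exact ⟨x, hx, by simp [Submodule.mkQ_apply, ← Submodule.Quotient.mk''_eq_mk,
          Quotient.out_eq']⟩
    rw [this, hs]
  have key : ∀ n : ℕ,
      (⊤ : Submodule F V) = (⨆ i ∈ Finset.range n, Submodule.map (f ^ i) W) ⊔
        LinearMap.range (f ^ n) := by
    intro n
    induction n with
    | zero => simp [Module.End.one_eq_id]
    | succ n ih =>
      have hr : LinearMap.range (f ^ n) =
          Submodule.map (f ^ n) W ⊔ LinearMap.range (f ^ (n + 1)) := by
        have h1 : LinearMap.range (f ^ n) = Submodule.map (f ^ n) ⊤ :=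
          (Submodule.map_top _).symm
        rw [h1, ← hWtop, Submodule.map_sup, sup_comm]
        congr 1
        have : (f ^ (n + 1) : V →ₗ[F] V) = (f ^ n).comp f := by
          rw [pow_succ, Module.End.mul_eq_comp]
        rw [this, LinearMap.range_comp]
      rw [ih, hr, ← sup_assoc]
      congr 1
      rw [Finset.range_add_one]
      rw [Finset.iSup_insert]
      rw [sup_comm]
  have htop : (⊤ : Submodule F V) = ⨆ i ∈ Finset.range k, Submodule.map (f ^ i) W := by
    have := key k
    rw [hk] at this
    simpa using this
  have hfd : FiniteDimensional F (⨆ i ∈ Finset.range k, Submodule.map (f ^ i) W :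
      Submodule F V) := by
    rw [iSup_subtype']
    exact Submodule.finiteDimensional_iSup _
  have : FiniteDimensional F (⊤ : Submodule F V) := htop ▸ hfd
  exact Submodule.topEquiv.finiteDimensional
end

section
/- Let V be a vector space over F, U a subspace of V, φ : V/U → U a linear map, and define x_φ : V → V by v ↦ v + φ(v+U). Then x_φ is an invertible linear map, and the map φ ↦ x_φ is a group isomorphism from the additive group Hom(V/U, U) onto the group of all invertible linear maps g with [V,g] ≤ U and [U,g] = 0. -/
section aux
variable {F V : Type*} [Field F] [AddCommGroup V] [Module F V] (U : Submodule F V)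

private def Amap (φ : (V ⧸ U) →ₗ[F] U) : V →ₗ[F] V :=
  LinearMap.id + U.subtype ∘ₗ φ ∘ₗ U.mkQ

private lemma Amap_apply (φ : (V ⧸ U) →ₗ[F] U) (v : V) :
    Amap U φ v = v + (φ (Submodule.Quotient.mk v) : V) := rfl

private lemma Amap_comp (φ ψ : (V ⧸ U) →ₗ[F] U) :
    (Amap U φ).comp (Amap U ψ) = Amap U (φ + ψ) := by
  ext v
  simp only [LinearMap.comp_apply, Amap_apply, LinearMap.add_apply]
  have : (Submodule.Quotient.mk (v + (ψ (Submodule.Quotient.mk v) : V)) : V ⧸ U)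
      = Submodule.Quotient.mk v := by
    rw [Submodule.Quotient.mk_add]
    simp [Submodule.Quotient.mk_eq_zero]
  rw [this]
  push_cast
  abel

end aux

/-- For a subspace `U ≤ V` and `φ : V/U → U` linear, the map
`x_φ : v ↦ v + φ(v + U)` is an invertible linear map, and `φ ↦ x_φ` is a group
isomorphism from the additive group `Hom(V/U, U)` onto the group of all
`g ∈ GL(V)` with `[V,g] ≤ U` and `[U,g] = 0`. -/
theorem stmt1 {F V : Type*} [Field F] [AddCommGroup V] [Module F V]
    (U : Submodule F V) :
    ∃ f : ((V ⧸ U) →ₗ[F] U) → (V ≃ₗ[F] V),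
      (∀ (φ : (V ⧸ U) →ₗ[F] U) (v : V),
          f φ v = v + (φ (Submodule.Quotient.mk v) : V)) ∧
      Function.Injective f ∧
      (∀ φ ψ : (V ⧸ U) →ₗ[F] U, f (φ + ψ) = f φ * f ψ) ∧
      Set.range f =
        {g : V ≃ₗ[F] V | (∀ v : V, g v - v ∈ U) ∧ ∀ u ∈ U, g u = u} := by
  refine ⟨fun φ => LinearEquiv.ofLinear (Amap U φ) (Amap U (-φ))
    (by rw [Amap_comp]; simp [Amap]) (by rw [Amap_comp]; simp [Amap]), ?_, ?_, ?_, ?_⟩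
  · intro φ v; rfl
  · intro φ ψ h
    ext v
    have := congrArg (fun g : V ≃ₗ[F] V => g v) h
    simp only [LinearEquiv.ofLinear_apply] at this
    rw [Amap_apply, Amap_apply] at this
    have h2 : (φ (Submodule.Quotient.mk v) : V) = ψ (Submodule.Quotient.mk v) := by
      have := add_left_cancel this
      exact_mod_cast this
    exact congrArg _ (Subtype.ext h2)
  · intro φ ψ
    ext v
    show Amap U (φ + ψ) v = Amap U φ (Amap U ψ v)
    rw [← Amap_comp]; rfl
  · ext g
    constructor
    · rintro ⟨φ, rfl⟩
      constructor
      · intro v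
        simp only [LinearEquiv.ofLinear_apply, Amap_apply]
        simp
      · intro u hu
        simp only [LinearEquiv.ofLinear_apply, Amap_apply]
        have : (Submodule.Quotient.mk u : V ⧸ U) = 0 := by
          simp [Submodule.Quotient.mk_eq_zero, hu]
        rw [this]; simp
    · rintro ⟨h1, h2⟩
      -- define φ : V/U → U by mk v ↦ ⟨g v - v, h1 v⟩
      have hker : U ≤ LinearMap.ker ((g.toLinearMap - LinearMap.id).codRestrict U
          (fun v => by simpa using h1 v)) := by
        intro u hu
        simp only [LinearMap.mem_ker]
        ext
        simp [h2 u hu]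
      refine ⟨U.liftQ _ hker, ?_⟩
      ext v
      simp only [LinearEquiv.ofLinear_apply, Amap_apply]
      erw [Submodule.liftQ_apply]
      simp
end

section
/- Let V be an F-vector space and 𝓛 a series in V with stability group S(𝓛) = {g ∈ GL(V) : [T,g] ≤ B for every jump (B,T) of 𝓛}. Let F(𝓛) = {g ∈ S(𝓛) : g stabilizes some finite subseries of 𝓛}. Then F(𝓛) is a normal subgroup of S(𝓛), and for every g ∈ F(𝓛), the normal closure g^{S(𝓛)} stabilizes the same finite subseries that g stabilizes; in particular g^{S(𝓛)} is nilpotent. -/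
section Defs

variable {F V : Type*} [Field F] [AddCommGroup V] [Module F V]

/-- A *series* in a vector space `V`. -/
def IsSeries (𝓛 : Set (Submodule F V)) : Prop :=
  ⊥ ∈ 𝓛 ∧ ⊤ ∈ 𝓛 ∧ IsChain (· ≤ ·) 𝓛 ∧
    ∀ 𝓕 : Set (Submodule F V), 𝓕 ⊆ 𝓛 → 𝓕.Nonempty → sInf 𝓕 ∈ 𝓛 ∧ sSup 𝓕 ∈ 𝓛

/-- `(B, T)` is a *jump* of the series `𝓛`. -/
def IsJump (𝓛 : Set (Submodule F V)) (B T : Submodule F V) : Prop :=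
  B ∈ 𝓛 ∧ T ∈ 𝓛 ∧ B < T ∧ ∀ U ∈ 𝓛, B ≤ U → U ≤ T → U = B ∨ U = T

/-- The *stability group* `S(𝓛)` of a series `𝓛`: all invertible linear maps acting
trivially on every jump quotient, i.e. with `[T, g] ≤ B` for every jump `(B, T)`. -/
def stab (𝓛 : Set (Submodule F V)) : Set (V ≃ₗ[F] V) :=
  {g | ∀ B T : Submodule F V, IsJump 𝓛 B T → ∀ x ∈ T, g x - x ∈ B}

/-- `g` stabilizes the finite series `⊥ = W 0 ≤ W 1 ≤ ⋯ ≤ W n = ⊤`. -/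
def StabFin (g : V ≃ₗ[F] V) (n : ℕ) (W : Fin (n + 1) → Submodule F V) : Prop :=
  W 0 = ⊥ ∧ W (Fin.last n) = ⊤ ∧ Monotone W ∧
    ∀ i : Fin n, ∀ x ∈ W i.succ, g x - x ∈ W i.castSucc

/-- `F(𝓛)`: the elements of `S(𝓛)` stabilizing some finite subseries of `𝓛`. -/
def FSet (𝓛 : Set (Submodule F V)) : Set (V ≃ₗ[F] V) :=
  {g ∈ stab 𝓛 | ∃ (n : ℕ) (W : Fin (n + 1) → Submodule F V),
    (∀ i, W i ∈ 𝓛) ∧ StabFin g n W}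

end Defs

/-!
Elements of `S(𝓛)` preserve every member of `𝓛`: a vector `x ∉ ⊥` lies in `T \ B` for a jump
`(B, T)`, and `T` is contained in every member containing `x`. Hence `S(𝓛)` is a group and
conjugation by it preserves the stabilization of a subseries of `𝓛`. Two finite subseries
`(w i)`, `(w' j)` have the common refinement `m k = ⨆_{i + j ≤ k} w i ⊓ w' j`. It lies in `𝓛`
because `𝓛` is a chain closed under unions, and it is stabilized by both maps, since each of them
preserves the other subseries; this gives closure under products.

For nilpotency, extend the subseries to an `ℕ`-indexed filtration `w`. The maps `g` with
`(g - 1) w (i + k) ≤ w i` form subgroups `D k` for `k ≥ 1`, and `⁅D k, D 1⁆ ≤ D (k + 1)` by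
`⁅a, b⁆ - 1 = ((a - 1)(b - 1) - (b - 1)(a - 1)) a⁻¹ b⁻¹`, so they cut out a descending central
series of any subgroup of `D 1`, which reaches `1` at `k = n + 1`.
-/

section Filtration

open scoped commutatorElement

variable {R M : Type*} [Ring R] [AddCommGroup M] [Module R M]

section ActsTrivially

variable {P Q : Submodule R M} {g h : M ≃ₗ[R] M}

lemma mul_apply_sub_mem (hPQ : P ≤ Q) (hg : ∀ x ∈ Q, g x - x ∈ P)
    (hh : ∀ x ∈ Q, h x - x ∈ P) : ∀ x ∈ Q, (g * h) x - x ∈ P := by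
  intro x hx
  have hhx : h x ∈ Q := by simpa using add_mem (hPQ (hh x hx)) hx
  simpa using add_mem (hg _ hhx) (hh x hx)

lemma inv_apply_sub_mem (hg : ∀ x ∈ Q, g x - x ∈ P) (hQ : ∀ x ∈ Q, g⁻¹ x ∈ Q) :
    ∀ x ∈ Q, g⁻¹ x - x ∈ P := fun x hx => by
  simpa using neg_mem (hg _ (hQ x hx))

end ActsTrivially

def Stabilizes (w : ℕ → Submodule R M) (k : ℕ) (g : M ≃ₗ[R] M) : Prop :=
  ∀ i, ∀ x ∈ w (i + k), g x - x ∈ w i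

namespace Stabilizes

variable {w : ℕ → Submodule R M} {n k : ℕ} {g a b : M ≃ₗ[R] M}

lemma one : Stabilizes w k (1 : M ≃ₗ[R] M) := fun i x _ => by simp

lemma mono (hw : Monotone w) {l : ℕ} (hkl : k ≤ l) (hg : Stabilizes w l g) :
    Stabilizes w k g :=
  fun i x hx => hg i x (hw (by omega) hx)

lemma mul (hw : Monotone w) (ha : Stabilizes w k a) (hb : Stabilizes w k b) :
    Stabilizes w k (a * b) :=
  fun i => mul_apply_sub_mem (hw (Nat.le_add_right i k)) (ha i) (hb i)

lemma inv_apply_mem (hw : Monotone w) (htop : w n = ⊤) (hg : Stabilizes w 1 g) {i : ℕ}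
    {x : M} (hx : x ∈ w i) : g⁻¹ x ∈ w i := by
  suffices ∀ d, g⁻¹ x ∈ w (i + d) → g⁻¹ x ∈ w i from
    this n (hw (Nat.le_add_left n i) (htop ▸ Submodule.mem_top))
  intro d
  induction d with
  | zero => exact id
  | succ d ih =>
    -- for `y = g⁻¹ x`, `x - y = g y - y` lies one step below `y`, and `x` already lies in `w i`
    intro hy
    exact ih (by simpa using sub_mem (hw (Nat.le_add_right i d) hx) (hg (i + d) _ hy))

lemma inv (hw : Monotone w) (htop : w n = ⊤) (hg : Stabilizes w (k + 1) g) :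
    Stabilizes w (k + 1) g⁻¹ :=
  fun i => inv_apply_sub_mem (hg i) fun _ hx =>
    (hg.mono hw (Nat.le_add_left 1 k)).inv_apply_mem hw htop hx

lemma commutator (hw : Monotone w) (htop : w n = ⊤) (ha : Stabilizes w (k + 1) a)
    (hb : Stabilizes w 1 b) : Stabilizes w (k + 2) ⁅a, b⁆ := by
  intro i x hx
  set z := a⁻¹ (b⁻¹ x)
  have hz : z ∈ w (i + (k + 2)) :=
    (ha.mono hw (Nat.le_add_left 1 k)).inv_apply_mem hw htop (hb.inv_apply_mem hw htop hx)
  have hbz : b z - z ∈ w (i + (k + 1)) := hb _ z hz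
  have haz : a z - z ∈ w (i + 1) :=
    ha (i + 1) z (by rwa [show i + 1 + (k + 1) = i + (k + 2) by omega])
  have hx : x = b (a z) := by simp [z]
  have key : ⁅a, b⁆ x - x = (a (b z - z) - (b z - z)) - (b (a z - z) - (a z - z)) := by
    rw [show ⁅a, b⁆ x = a (b z) from rfl, hx, map_sub, map_sub]
    abel
  rw [key]
  exact sub_mem (ha i _ hbz) (hb i _ haz)

lemma eq_one (hbot : w 0 = ⊥) (htop : w k = ⊤) (hg : Stabilizes w k g) : g = 1 :=
  LinearEquiv.ext fun x => by
    simpa [hbot, sub_eq_zero] using hg 0 x (by simp [htop])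

end Stabilizes

variable {w : ℕ → Submodule R M} {n : ℕ}

def stabilizesSubgroup (hw : Monotone w) (htop : w n = ⊤) (k : ℕ) : Subgroup (M ≃ₗ[R] M) where
  carrier := {g | Stabilizes w (k + 1) g}
  one_mem' := Stabilizes.one
  mul_mem' := Stabilizes.mul hw
  inv_mem' := Stabilizes.inv hw htop

theorem isNilpotent_of_le_stabilizesSubgroup {hw : Monotone w} {htop : w n = ⊤}
    (hbot : w 0 = ⊥) {H : Subgroup (M ≃ₗ[R] M)} (hH : H ≤ stabilizesSubgroup hw htop 0) :
    Group.IsNilpotent H := by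
  refine (Subgroup.nilpotent_iff_finite_descending_central_series _).mpr
    ⟨n, fun k => (stabilizesSubgroup hw htop k).comap H.subtype, ⟨?_, ?_⟩, ?_⟩
  · exact eq_top_iff.mpr fun x _ => hH x.2
  · intro x k hx g
    exact Stabilizes.commutator hw htop hx (hH g.2)
  · refine eq_bot_iff.mpr fun x hx => Subgroup.mem_bot.mpr (Subtype.ext ?_)
    exact Stabilizes.eq_one hbot htop (Stabilizes.mono hw (Nat.le_succ n) hx)

variable {w' : ℕ → Submodule R M}

def jointRefinement (w w' : ℕ → Submodule R M) (k : ℕ) : Submodule R M :=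
  sSup {A | ∃ i j, i + j ≤ k ∧ A = w i ⊓ w' j}

lemma jointRefinement_comm (w w' : ℕ → Submodule R M) :
    jointRefinement w w' = jointRefinement w' w := by
  ext1 k
  simp only [jointRefinement]
  congr 1
  ext A
  constructor <;> rintro ⟨i, j, hij, rfl⟩ <;> exact ⟨j, i, by omega, inf_comm _ _⟩

lemma inf_le_jointRefinement {i j k : ℕ} (h : i + j ≤ k) :
    w i ⊓ w' j ≤ jointRefinement w w' k :=
  le_sSup ⟨i, j, h, rfl⟩

lemma monotone_jointRefinement : Monotone (jointRefinement w w') :=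
  fun _ _ hkl => sSup_le_sSup fun _ ⟨i, j, hij, hA⟩ => ⟨i, j, hij.trans hkl, hA⟩

lemma jointRefinement_zero (hbot : w 0 = ⊥) : jointRefinement w w' 0 = ⊥ :=
  eq_bot_iff.2 <| sSup_le fun _ ⟨i, j, hij, hA⟩ => by
    obtain rfl : i = 0 := by omega
    simp [hA, hbot]

lemma jointRefinement_add_eq_top {n n' : ℕ} (htop : w n = ⊤) (htop' : w' n' = ⊤) :
    jointRefinement w w' (n + n') = ⊤ := by
  simpa [htop, htop'] using inf_le_jointRefinement (w := w) (w' := w') (le_refl (n + n'))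

lemma stabilizes_jointRefinement {g : M ≃ₗ[R] M} (hbot : w 0 = ⊥) (hg : Stabilizes w 1 g)
    (hw' : ∀ j, ∀ x ∈ w' j, g x ∈ w' j) : Stabilizes (jointRefinement w w') 1 g := by
  intro k
  suffices jointRefinement w w' (k + 1) ≤
      (jointRefinement w w' k).comap ((g : M →ₗ[R] M) - 1) from
    fun x hx => by simpa using this hx
  refine sSup_le ?_
  rintro _ ⟨i, j, hij, rfl⟩ x ⟨hxi, hxj⟩
  rw [Submodule.mem_comap, LinearMap.sub_apply, LinearEquiv.coe_coe, Module.End.one_apply]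
  cases i with
  | zero => simp [(Submodule.mem_bot R).mp (hbot ▸ hxi)]
  | succ i =>
    exact inf_le_jointRefinement (by omega) ⟨hg i x hxi, sub_mem (hw' j x hxj) hxj⟩

end Filtration

section Series

variable {F V : Type*} [Field F] [AddCommGroup V] [Module F V] {𝓛 : Set (Submodule F V)}

namespace IsSeries

/-- The jump of `𝓛` at `x` sits between the union of the members avoiding `x` and the
intersection of those containing it. -/
lemma exists_isJump (hser : IsSeries 𝓛) {x : V} {U : Submodule F V} (hU : U ∈ 𝓛)
    (hxU : x ∉ U) :
    ∃ B T, IsJump 𝓛 B T ∧ x ∈ T ∧ x ∉ B ∧ (∀ U ∈ 𝓛, x ∉ U → U ≤ B) ∧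
      (∀ U ∈ 𝓛, x ∈ U → T ≤ U) := by
  obtain ⟨-, htop, hchain, hclosed⟩ := hser
  set S₁ : Set (Submodule F V) := {A | A ∈ 𝓛 ∧ x ∉ A}
  set S₂ : Set (Submodule F V) := {A | A ∈ 𝓛 ∧ x ∈ A}
  have hS₁ : S₁ ⊆ 𝓛 := fun _ hA => hA.1
  have hne : S₁.Nonempty := ⟨U, hU, hxU⟩
  have hB : sSup S₁ ∈ 𝓛 := (hclosed S₁ hS₁ hne).2
  have hT : sInf S₂ ∈ 𝓛 := (hclosed S₂ (fun _ hA => hA.1) ⟨⊤, htop, trivial⟩).1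
  have hxT : x ∈ sInf S₂ := Submodule.mem_sInf.2 fun _ hA => hA.2
  have hxB : x ∉ sSup S₁ := by
    rw [Submodule.mem_sSup_of_directed hne (hchain.mono hS₁).directedOn]
    rintro ⟨A, hA, hxA⟩
    exact hA.2 hxA
  have hle₁ : ∀ U ∈ 𝓛, x ∉ U → U ≤ sSup S₁ := fun U hU hxU => le_sSup ⟨hU, hxU⟩
  have hle₂ : ∀ U ∈ 𝓛, x ∈ U → sInf S₂ ≤ U := fun U hU hxU => sInf_le ⟨hU, hxU⟩
  have hBT : sSup S₁ < sInf S₂ :=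
    ((hchain.total hB hT).resolve_right fun h => hxB (h hxT)).lt_of_ne
      fun h => hxB (h ▸ hxT)
  refine ⟨_, _, ⟨hB, hT, hBT, fun U' hU' hBU' hU'T => ?_⟩, hxT, hxB, hle₁, hle₂⟩
  by_cases hxU' : x ∈ U'
  · exact Or.inr (hU'T.antisymm (hle₂ U' hU' hxU'))
  · exact Or.inl ((hle₁ U' hU' hxU').antisymm hBU')

variable {g : V ≃ₗ[F] V} {U : Submodule F V} {x : V}

lemma apply_mem (hser : IsSeries 𝓛) (hg : g ∈ stab 𝓛) (hU : U ∈ 𝓛) (hx : x ∈ U) :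
    g x ∈ U := by
  by_cases hx₀ : x ∈ (⊥ : Submodule F V)
  · simp [(Submodule.mem_bot F).mp hx₀]
  obtain ⟨B, T, hjump, hxT, -, -, hT⟩ := hser.exists_isJump hser.1 hx₀
  simpa using add_mem ((hjump.2.2.1.le.trans (hT U hU hx)) (hg B T hjump x hxT)) hx

lemma inv_apply_mem (hser : IsSeries 𝓛) (hg : g ∈ stab 𝓛) (hU : U ∈ 𝓛) (hx : x ∈ U) :
    g⁻¹ x ∈ U := by
  by_contra hxU
  obtain ⟨B, T, hjump, hyT, hyB, hB, -⟩ := hser.exists_isJump hU hxU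
  exact hyB (by simpa using sub_mem (hB U hU hxU hx) (hg B T hjump _ hyT))

def stabSubgroup (hser : IsSeries 𝓛) : Subgroup (V ≃ₗ[F] V) where
  carrier := stab 𝓛
  one_mem' := fun B T _ x _ => by simp
  mul_mem' := fun ha hb B T hjump =>
    mul_apply_sub_mem hjump.2.2.1.le (ha B T hjump) (hb B T hjump)
  inv_mem' := fun hg B T hjump =>
    inv_apply_sub_mem (hg B T hjump) fun _ => hser.inv_apply_mem hg hjump.2.1

lemma inf_mem (hser : IsSeries 𝓛) {U U' : Submodule F V} (hU : U ∈ 𝓛) (hU' : U' ∈ 𝓛) :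
    U ⊓ U' ∈ 𝓛 := by
  rcases hser.2.2.1.total hU hU' with h | h
  · rwa [inf_eq_left.2 h]
  · rwa [inf_eq_right.2 h]

lemma jointRefinement_mem (hser : IsSeries 𝓛) {w w' : ℕ → Submodule F V}
    (hw : ∀ i, w i ∈ 𝓛) (hw' : ∀ j, w' j ∈ 𝓛) (k : ℕ) : jointRefinement w w' k ∈ 𝓛 :=
  (hser.2.2.2 {A | ∃ i j, i + j ≤ k ∧ A = w i ⊓ w' j}
    (by rintro _ ⟨i, j, -, rfl⟩; exact hser.inf_mem (hw i) (hw' j))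
    ⟨w 0 ⊓ w' 0, 0, 0, Nat.zero_le k, rfl⟩).2

end IsSeries

end Series

section FiniteSeries

variable {F V : Type*} [Field F] [AddCommGroup V] [Module F V] {𝓛 : Set (Submodule F V)}
  {n : ℕ} {W : Fin (n + 1) → Submodule F V} {g h : V ≃ₗ[F] V}

def extendByLast (W : Fin (n + 1) → Submodule F V) (i : ℕ) : Submodule F V :=
  W (Fin.clamp i n)

@[simp]
lemma extendByLast_val (i : Fin (n + 1)) : extendByLast W i = W i :=
  congrArg W (Fin.ext (by simp [i.is_le]))

lemma stabFin_of_stabilizes {w : ℕ → Submodule F V} (hw : Monotone w) (hbot : w 0 = ⊥)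
    (htop : w n = ⊤) (hg : Stabilizes w 1 g) : StabFin g n (fun i => w i) :=
  ⟨hbot, htop, fun _ _ hij => hw hij, fun i => hg i⟩

namespace StabFin

lemma monotone_extendByLast (hg : StabFin g n W) : Monotone (extendByLast W) :=
  hg.2.2.1.comp Fin.clamp_monotone

lemma extendByLast_zero (hg : StabFin g n W) : extendByLast W 0 = ⊥ := by
  rw [extendByLast, show Fin.clamp 0 n = 0 from Fin.ext (by simp), hg.1]

lemma extendByLast_self (hg : StabFin g n W) : extendByLast W n = ⊤ := by
  rw [extendByLast, Fin.clamp_eq_last n n le_rfl, hg.2.1]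

lemma stabilizes_extendByLast (hg : StabFin g n W) : Stabilizes (extendByLast W) 1 g := by
  intro i x hx
  rcases lt_or_ge i n with hi | hi
  · have hsucc : Fin.clamp (i + 1) n = (⟨i, hi⟩ : Fin n).succ := Fin.ext (by simp; omega)
    have hcast : Fin.clamp i n = (⟨i, hi⟩ : Fin n).castSucc := Fin.ext (by simp; omega)
    rw [extendByLast, hsucc] at hx
    rw [extendByLast, hcast]
    exact hg.2.2.2 _ x hx
  · simp [extendByLast, Fin.clamp_eq_last i n hi, hg.2.1]

lemma of_stabilizes_extendByLast (hg : StabFin g n W) (hh : Stabilizes (extendByLast W) 1 h) :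
    StabFin h n W := by
  simpa using stabFin_of_stabilizes hg.monotone_extendByLast hg.extendByLast_zero
    hg.extendByLast_self hh

lemma inv (hg : StabFin g n W) : StabFin g⁻¹ n W :=
  hg.of_stabilizes_extendByLast <|
    hg.stabilizes_extendByLast.inv hg.monotone_extendByLast hg.extendByLast_self

lemma conj (hser : IsSeries 𝓛) (hW : ∀ i, W i ∈ 𝓛) {s : V ≃ₗ[F] V} (hs : s ∈ stab 𝓛)
    (hg : StabFin g n W) : StabFin (s⁻¹ * g * s) n W := by
  refine ⟨hg.1, hg.2.1, hg.2.2.1, fun i x hx => ?_⟩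
  simpa using hser.inv_apply_mem hs (hW _) (hg.2.2.2 i _ (hser.apply_mem hs (hW _) hx))

lemma closure_conj_le (hser : IsSeries 𝓛) (hW : ∀ i, W i ∈ 𝓛) (hg : StabFin g n W) :
    Subgroup.closure {c | ∃ s ∈ stab 𝓛, c = s⁻¹ * g * s} ≤
      stabilizesSubgroup hg.monotone_extendByLast hg.extendByLast_self 0 :=
  (Subgroup.closure_le _).2 fun _ ⟨_, hs, hc⟩ =>
    hc ▸ (hg.conj hser hW hs).stabilizes_extendByLast

end StabFin

namespace FSet

lemma one_mem (hser : IsSeries 𝓛) : (1 : V ≃ₗ[F] V) ∈ FSet 𝓛 := by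
  refine ⟨hser.stabSubgroup.one_mem, 1, ![⊥, ⊤], ?_, rfl, rfl, ?_, fun _ x _ => by simp⟩
  · simp [Fin.forall_fin_two, hser.1, hser.2.1]
  · simp [Fin.monotone_iff_le_succ]

lemma inv_mem (hser : IsSeries 𝓛) (hg : g ∈ FSet 𝓛) : g⁻¹ ∈ FSet 𝓛 :=
  let ⟨hgs, n, W, hW, hgW⟩ := hg
  ⟨hser.stabSubgroup.inv_mem hgs, n, W, hW, hgW.inv⟩

lemma conj_mem (hser : IsSeries 𝓛) (hg : g ∈ FSet 𝓛) {s : V ≃ₗ[F] V} (hs : s ∈ stab 𝓛) :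
    s⁻¹ * g * s ∈ FSet 𝓛 :=
  let ⟨hgs, n, W, hW, hgW⟩ := hg
  let S := hser.stabSubgroup
  ⟨S.mul_mem (S.mul_mem (S.inv_mem hs) hgs) hs, n, W, hW, hgW.conj hser hW hs⟩

lemma mul_mem (hser : IsSeries 𝓛) (hg : g ∈ FSet 𝓛) (hh : h ∈ FSet 𝓛) : g * h ∈ FSet 𝓛 := by
  obtain ⟨hgs, n, W, hW, hgW⟩ := hg
  obtain ⟨hhs, n', W', hW', hhW'⟩ := hh
  have hgm := stabilizes_jointRefinement (w' := extendByLast W') hgW.extendByLast_zero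
    hgW.stabilizes_extendByLast fun _ _ hx => hser.apply_mem hgs (hW' _) hx
  have hhm := stabilizes_jointRefinement (w' := extendByLast W) hhW'.extendByLast_zero
    hhW'.stabilizes_extendByLast fun _ _ hx => hser.apply_mem hhs (hW _) hx
  rw [jointRefinement_comm] at hhm
  refine ⟨hser.stabSubgroup.mul_mem hgs hhs, n + n',
    fun i => jointRefinement (extendByLast W) (extendByLast W') i,
    fun _ => hser.jointRefinement_mem (fun _ => hW _) (fun _ => hW' _) _,
    stabFin_of_stabilizes monotone_jointRefinement
      (jointRefinement_zero hgW.extendByLast_zero)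
      (jointRefinement_add_eq_top hgW.extendByLast_self hhW'.extendByLast_self)
      (hgm.mul monotone_jointRefinement hhm)⟩

end FSet

end FiniteSeries

/-- `F(𝓛)` is a normal subgroup of `S(𝓛)`, and for each `g ∈ F(𝓛)`
the normal closure `g^{S(𝓛)}` stabilizes the same finite subseries of `𝓛` stabilized
by `g`; in particular the normal closure of `g` is a nilpotent group. -/
theorem stmt8 {F V : Type*} [Field F] [AddCommGroup V] [Module F V]
    (𝓛 : Set (Submodule F V)) (hser : IsSeries 𝓛) :
    FSet 𝓛 ⊆ stab 𝓛 ∧ (1 : V ≃ₗ[F] V) ∈ FSet 𝓛 ∧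
    (∀ g ∈ FSet 𝓛, g⁻¹ ∈ FSet 𝓛) ∧
    (∀ g ∈ FSet 𝓛, ∀ h ∈ FSet 𝓛, g * h ∈ FSet 𝓛) ∧
    (∀ g ∈ FSet 𝓛, ∀ s ∈ stab 𝓛, s⁻¹ * g * s ∈ FSet 𝓛) ∧
    ∀ g ∈ FSet 𝓛, ∀ (n : ℕ) (W : Fin (n + 1) → Submodule F V),
      (∀ i, W i ∈ 𝓛) → StabFin g n W →
      (∀ x ∈ Subgroup.closure {c : V ≃ₗ[F] V | ∃ s ∈ stab 𝓛, c = s⁻¹ * g * s},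
        StabFin x n W) ∧
      Group.IsNilpotent
        ↥(Subgroup.closure {c : V ≃ₗ[F] V | ∃ s ∈ stab 𝓛, c = s⁻¹ * g * s}) := by
  refine ⟨fun _ hg => hg.1, FSet.one_mem hser, fun _ => FSet.inv_mem hser,
    fun _ hg _ => FSet.mul_mem hser hg, fun _ hg _ => FSet.conj_mem hser hg, ?_⟩
  intro g _ n W hW hgW
  have hle := hgW.closure_conj_le hser hW
  exact ⟨fun x hx => hgW.of_stabilizes_extendByLast (hle hx),
    isNilpotent_of_le_stabilizesSubgroup hgW.extendByLast_zero hle⟩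
end

section
/- Let V be a finite-dimensional F-vector space with a series 0 = W_0 < W_1 < ⋯ < W_n = V, and let G ≤ GL(V) satisfy (g−1)(W_i) ⊆ W_{i−1} for all g ∈ G and all i. Then G is nilpotent of class at most n−1, and every element of G satisfies (g−1)^n = 0. -/
/-!
Let `Lₖ` be the set of endomorphisms `f` with `f (W (i + k)) ⊆ W i` for all `i`, so that
`Lₖ Lₗ ⊆ Lₖ₊ₗ`, and let `Uₖ` be the group of filtration-preserving automorphisms `g` with
`g - 1 ∈ Lₖ`. The identity `[g, h] - 1 = ((g - 1)(h - 1) - (h - 1)(g - 1)) g⁻¹ h⁻¹` gives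
`[Uₖ, Uₗ] ≤ Uₖ₊ₗ`. Since `G ≤ U₁`, the `k`-th term of its lower central series lies in `Uₖ₊₁`,
and `(g - 1)ⁿ ∈ Lₙ`; both vanish because `Lₙ = 0` when `W 0 = 0` and `W n = V`.
-/

section Lowering

variable {R M : Type*} [Ring R] [AddCommGroup M] [Module R M] (W : ℕ → Submodule R M)

def lowering (k : ℕ) : AddSubgroup (Module.End R M) where
  carrier := {f | ∀ i, ∀ x ∈ W (i + k), f x ∈ W i}
  zero_mem' _ _ _ := zero_mem _
  add_mem' hf hg i x hx := add_mem (hf i x hx) (hg i x hx)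
  neg_mem' hf i x hx := neg_mem (hf i x hx)

instance : SetLike.GradedMonoid (lowering W) where
  one_mem _ _ hx := hx
  mul_mem k l f g hf hg i x hx := hf i _ (hg (i + k) x (by rwa [add_assoc]))

variable {W}

theorem lowering_antitone (hW : Monotone W) : Antitone (lowering W) :=
  fun _ _ hkl _ hf i x hx => hf i x (hW (Nat.add_le_add_left hkl i) hx)

theorem mem_lowering_zero_of_sub_one_mem (hW : Monotone W) {f : Module.End R M}
    (hf : f - 1 ∈ lowering W 1) : f ∈ lowering W 0 := by
  simpa using add_mem (lowering_antitone hW zero_le_one hf) SetLike.GradedOne.one_mem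

theorem lowering_eq_bot {k : ℕ} (h0 : W 0 = ⊥) (hk : W k = ⊤) : lowering W k = ⊥ := by
  refine (AddSubgroup.eq_bot_iff_forall _).2 fun f hf => LinearMap.ext fun x => ?_
  simpa [h0] using hf 0 x (by simp [hk])

end Lowering

section CongruenceSubgroup

open scoped commutatorElement

variable {A Γ : Type*} [Ring A] [Group Γ] (L : ℕ → AddSubgroup A) [SetLike.GradedMonoid L]
  (φ : Γ →* A)

def filtrationStabilizer : Subgroup Γ where
  carrier := {g | φ g ∈ L 0 ∧ φ g⁻¹ ∈ L 0}
  one_mem' := by simpa using SetLike.GradedOne.one_mem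
  mul_mem' {g h} hg hh := by
    simpa using And.intro (SetLike.mul_mem_graded hg.1 hh.1) (SetLike.mul_mem_graded hh.2 hg.2)
  inv_mem' hg := by simpa using hg.symm

def congruenceSubgroup (k : ℕ) : Subgroup Γ where
  carrier := {g | g ∈ filtrationStabilizer L φ ∧ φ g - 1 ∈ L k}
  one_mem' := by simp [(filtrationStabilizer L φ).one_mem]
  mul_mem' {g h} hg hh := by
    refine ⟨mul_mem hg.1 hh.1, ?_⟩
    have hmul : φ (g * h) - 1 = (φ g - 1) * φ h + (φ h - 1) := by
      rw [map_mul]; noncomm_ring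
    rw [hmul]
    exact add_mem (add_zero k ▸ SetLike.mul_mem_graded hg.2 hh.1.1) hh.2
  inv_mem' {g} hg := by
    refine ⟨inv_mem hg.1, ?_⟩
    have hinv : φ g⁻¹ - 1 = -(φ g⁻¹ * (φ g - 1)) := by
      rw [mul_sub, ← map_mul, inv_mul_cancel, map_one, mul_one, neg_sub]
    rw [hinv]
    exact neg_mem (zero_add k ▸ SetLike.mul_mem_graded hg.1.2 hg.2)

variable {L φ}

theorem commutatorElement_mem_congruenceSubgroup {g h : Γ} {k l : ℕ}
    (hg : g ∈ congruenceSubgroup L φ k) (hh : h ∈ congruenceSubgroup L φ l) :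
    ⁅g, h⁆ ∈ congruenceSubgroup L φ (k + l) := by
  have hstab : g⁻¹ * h⁻¹ ∈ filtrationStabilizer L φ := mul_mem (inv_mem hg.1) (inv_mem hh.1)
  refine ⟨mul_mem (mul_mem (mul_mem hg.1 hh.1) (inv_mem hg.1)) (inv_mem hh.1), ?_⟩
  have hcomm : φ ⁅g, h⁆ - 1
      = ((φ g - 1) * (φ h - 1) - (φ h - 1) * (φ g - 1)) * φ (g⁻¹ * h⁻¹) := by
    have hone : φ h * φ g * φ (g⁻¹ * h⁻¹) = 1 := by
      simp only [← map_mul, mul_assoc, mul_inv_cancel_left, mul_inv_cancel, map_one]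
    calc φ ⁅g, h⁆ - 1 = (φ g * φ h - φ h * φ g) * φ (g⁻¹ * h⁻¹) := by
          rw [sub_mul, hone, commutatorElement_def]; simp only [map_mul, mul_assoc]
      _ = _ := by noncomm_ring
  rw [hcomm]
  refine add_zero (k + l) ▸ SetLike.mul_mem_graded (sub_mem ?_ ?_) hstab.1
  · exact SetLike.mul_mem_graded hg.2 hh.2
  · exact add_comm l k ▸ SetLike.mul_mem_graded hh.2 hg.2

theorem lowerCentralSeries_le_congruenceSubgroup {G : Subgroup Γ}
    (hG : G ≤ congruenceSubgroup L φ 1) (k : ℕ) :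
    G.lowerCentralSeries k ≤ congruenceSubgroup L φ (k + 1) := by
  induction k with
  | zero => exact hG
  | succ k ih =>
    rw [Subgroup.lowerCentralSeries_succ, Subgroup.commutator_le]
    exact fun g hg h hh => commutatorElement_mem_congruenceSubgroup (ih hg) (hG hh)

theorem congruenceSubgroup_eq_bot {k : ℕ} (hφ : Function.Injective φ) (hL : L k = ⊥) :
    congruenceSubgroup L φ k = ⊥ := by
  refine (Subgroup.eq_bot_iff_forall _).2 fun g hg => hφ ?_
  have h := hg.2
  rwa [hL, AddSubgroup.mem_bot, sub_eq_zero, ← map_one φ] at h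

end CongruenceSubgroup

section FinSeries

variable {R M : Type*} [Ring R] [AddCommGroup M] [Module R M] {n : ℕ}
  {W : Fin (n + 1) → Submodule R M}

theorem monotone_comp_clamp (hW : Monotone W) : Monotone fun j => W (Fin.clamp j n) :=
  fun _ _ hij => hW (by simp only [Fin.le_def, Fin.clamp]; omega)

theorem comp_clamp_eq_top (htop : W (Fin.last n) = ⊤) {j : ℕ} (hj : n ≤ j) :
    W (Fin.clamp j n) = ⊤ := by
  rwa [show Fin.clamp j n = Fin.last n from Fin.ext (by simp [Fin.clamp, hj])]

theorem mem_lowering_one_comp_clamp (htop : W (Fin.last n) = ⊤) {f : Module.End R M}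
    (hf : ∀ i : Fin n, ∀ x ∈ W i.succ, f x ∈ W i.castSucc) :
    f ∈ lowering (fun j => W (Fin.clamp j n)) 1 := by
  intro i x hx
  rcases lt_or_ge i n with hi | hi
  · have hsucc : Fin.clamp (i + 1) n = (⟨i, hi⟩ : Fin n).succ :=
      Fin.ext (by simp [Fin.clamp]; omega)
    have hcast : Fin.clamp i n = (⟨i, hi⟩ : Fin n).castSucc :=
      Fin.ext (by simp [Fin.clamp]; omega)
    simp only [hsucc, hcast] at hx ⊢
    exact hf _ x hx
  · simp [comp_clamp_eq_top htop hi]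

end FinSeries

theorem stmt9_general {F V : Type*} [Field F] [AddCommGroup V] [Module F V]
    (n : ℕ) (W : Fin (n + 1) → Submodule F V)
    (h0 : W 0 = ⊥) (htop : W (Fin.last n) = ⊤) (hmono : Monotone W)
    (G : Subgroup (V ≃ₗ[F] V))
    (hstab : ∀ g ∈ G, ∀ i : Fin n, ∀ x ∈ W i.succ, g x - x ∈ W i.castSucc) :
    Group.IsNilpotent G ∧ lowerCentralSeries G (n - 1) = ⊥ ∧
    ∀ g ∈ G, ((g : V →ₗ[F] V) - 1) ^ n = 0 := by
  set L := lowering fun j => W (Fin.clamp j n)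
  set φ := LinearEquiv.automorphismGroup.toLinearMapMonoidHom (R := F) (M := V)
  have hL : ∀ j, n ≤ j → L j = ⊥ := fun j hj =>
    lowering_eq_bot (by simpa [Fin.clamp] using h0) (comp_clamp_eq_top htop hj)
  have hsub : ∀ g ∈ G, φ g - 1 ∈ L 1 := fun g hg =>
    mem_lowering_one_comp_clamp htop (by simpa [φ] using hstab g hg)
  have hG : G ≤ congruenceSubgroup L φ 1 := fun g hg =>
    ⟨⟨mem_lowering_zero_of_sub_one_mem (monotone_comp_clamp hmono) (hsub g hg),
      mem_lowering_zero_of_sub_one_mem (monotone_comp_clamp hmono) (hsub _ (inv_mem hg))⟩,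
      hsub g hg⟩
  have hbot : G.lowerCentralSeries (n - 1) = ⊥ := eq_bot_iff.2 <|
    (lowerCentralSeries_le_congruenceSubgroup hG _).trans
      (congruenceSubgroup_eq_bot LinearEquiv.toLinearMap_injective (hL _ (by omega))).le
  refine ⟨(Subgroup.isNilpotent_iff_lowerCentralSeries G).2 ⟨_, hbot⟩, hbot, fun g hg => ?_⟩
  have hpow : (φ g - 1) ^ n ∈ L n := by simpa using SetLike.pow_mem_graded n (hsub g hg)
  simpa [φ, hL n le_rfl] using hpow

/-- If a subgroup `G ≤ GL(V)` of a finite-dimensional space `V`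
stabilizes a series `⊥ = W 0 ≤ ⋯ ≤ W n = ⊤` (i.e. `(g-1)(W i.succ) ⊆ W i` for all
`g ∈ G`), then `G` is nilpotent of class at most `n - 1` and every `g ∈ G`
satisfies `(g - 1)^n = 0`. -/
theorem stmt9 {F V : Type*} [Field F] [AddCommGroup V] [Module F V]
    [FiniteDimensional F V]
    (n : ℕ) (W : Fin (n + 1) → Submodule F V)
    (h0 : W 0 = ⊥) (htop : W (Fin.last n) = ⊤) (hmono : Monotone W)
    (G : Subgroup (V ≃ₗ[F] V))
    (hstab : ∀ g ∈ G, ∀ i : Fin n, ∀ x ∈ W i.succ, g x - x ∈ W i.castSucc) :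
    Group.IsNilpotent G ∧ lowerCentralSeries G (n - 1) = ⊥ ∧
    ∀ g ∈ G, ((g : V →ₗ[F] V) - 1) ^ n = 0 :=
  stmt9_general n W h0 htop hmono G hstab
end

section
/- Let V be an F-vector space, 𝓛 a series in V, and 𝓑 an 𝓛-adapted basis: for each jump j = (B,T) of 𝓛, the set {v + B : v ∈ 𝓑, v ∈ T \ B} is a basis of T/B. Then for any U < W in 𝓛, the set {v + U : v ∈ 𝓑 ∩ (W \ U)} is a basis of W/U. -/
/-!
If a combination of vectors of `ℬ` lies in some `U ∈ 𝓛`, every vector of `ℬ` outside `U` has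
coefficient zero. Otherwise, let `K` be the span of the finitely many offending vectors, `T` the
least member of `𝓛` containing `K` and `B` the union of the members not containing `K`; since `K`
is finitely generated and `𝓛` is a chain, `K ≰ B`, so `(B, T)` is a jump with `U ≤ B`. Modulo `B`
the combination becomes a nontrivial relation among the vectors of `ℬ ∩ (T \ B)`, contradicting
adaptedness. Independence of `ℬ ∩ (W \ U)` modulo `U` is this fact directly, and spanning follows
from the case `U = W`, which gives `W = span (ℬ ∩ W)`.
-/

section

variable {F V : Type*} [Field F] [AddCommGroup V] [Module F V]

open Submodule Finsupp

theorem IsJump.le_or_le {𝓛 : Set (Submodule F V)} (hchain : IsChain (· ≤ ·) 𝓛)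
    {B T X : Submodule F V} (hj : IsJump 𝓛 B T) (hX : X ∈ 𝓛) : X ≤ B ∨ T ≤ X := by
  obtain ⟨hB, hT, hBT, hbetween⟩ := hj
  rcases hchain.total hX hB with hXB | hBX
  · exact .inl hXB
  rcases hchain.total hX hT with hXT | hTX
  · rcases hbetween X hX hBX hXT with rfl | rfl
    exacts [.inl le_rfl, .inr le_rfl]
  · exact .inr hTX

theorem IsSeries.exists_isJump_of_isCompactElement {𝓛 : Set (Submodule F V)} (h𝓛 : IsSeries 𝓛)
    {K : Submodule F V} (hK : IsCompactElement K) (hK₀ : K ≠ ⊥) :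
    ∃ B T, IsJump 𝓛 B T ∧ K ≤ T ∧ ¬K ≤ B := by
  obtain ⟨hbot, htop, hchain, hclosed⟩ := h𝓛
  set below := {X ∈ 𝓛 | ¬K ≤ X}
  set above := {X ∈ 𝓛 | K ≤ X}
  have hbelow : below.Nonempty := ⟨⊥, hbot, by simpa using hK₀⟩
  have habove : above.Nonempty := ⟨⊤, htop, le_top⟩
  have hKT : K ≤ sInf above := le_sInf fun X hX => hX.2
  have hKB : ¬K ≤ sSup below := fun hle => by
    obtain ⟨X, hX, hKX⟩ := hK
      below _ hbelow (hchain.mono fun _ h => h.1).directedOn (isLUB_sSup _) hle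
    exact hX.2 hKX
  refine ⟨sSup below, sInf above, ⟨(hclosed below (fun _ h => h.1) hbelow).2,
    (hclosed above (fun _ h => h.1) habove).1, lt_of_le_not_ge ?_ fun h => hKB (hKT.trans h),
    fun X hX hBX hXT => ?_⟩, hKT, hKB⟩
  · refine sSup_le fun X hX => le_sInf fun Y hY => ?_
    exact (hchain.total hX.1 hY.1).resolve_right fun hYX => hX.2 (hY.2.trans hYX)
  · by_cases hKX : K ≤ X
    · exact .inr (le_antisymm hXT (sInf_le ⟨hX, hKX⟩))
    · exact .inl (le_antisymm (le_sSup ⟨hX, hKX⟩) hBX)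

theorem Finsupp.mem_supported_of_linearIndepOn_mkQ {S : Set V} {B : Submodule F V}
    (hS : LinearIndepOn F B.mkQ S) {l : V →₀ F} (hl : l ∈ supported F F (S ∪ B))
    (hlB : linearCombination F id l ∈ B) : l ∈ supported F F B := by
  rw [supported_union] at hl
  obtain ⟨a, ha, b, hb, rfl⟩ := Submodule.mem_sup.1 hl
  have hbB : linearCombination F id b ∈ B := by
    simpa using mem_span_image_iff_linearCombination F (v := id) |>.2 ⟨b, hb, rfl⟩
  have ha₀ : a = 0 := by
    refine linearIndepOn_iff.1 hS a ha ?_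
    rw [← apply_linearCombination_id, mkQ_apply, Quotient.mk_eq_zero]
    exact (B.add_mem_iff_left hbB).1 (map_add (linearCombination F id) a b ▸ hlB)
  simpa [ha₀] using hb

variable {𝓛 : Set (Submodule F V)} {ℬ : Set V}

theorem IsSeries.mem_supported_of_linearCombination_mem (h𝓛 : IsSeries 𝓛)
    (hℬ : ∀ B T, IsJump 𝓛 B T → LinearIndepOn F B.mkQ (ℬ ∩ (T \ B)))
    {l : V →₀ F} (hl : l ∈ supported F F ℬ) {U : Submodule F V} (hU : U ∈ 𝓛)
    (hlU : linearCombination F id l ∈ U) : l ∈ supported F F U := by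
  classical
  by_contra hlU'
  set bad : Finset V := {v ∈ l.support | v ∉ U}
  obtain ⟨v₀, hv₀⟩ : bad.Nonempty := by
    simpa [bad, Finset.filter_nonempty_iff, mem_supported, Set.not_subset] using hlU'
  have hspan₀ : span F (bad : Set V) ≠ ⊥ := by
    rw [Ne, span_eq_bot]
    exact fun h => (Finset.mem_filter.1 hv₀).2 (h v₀ hv₀ ▸ U.zero_mem)
  obtain ⟨B, T, hj, hT, hB⟩ :=
    h𝓛.exists_isJump_of_isCompactElement (finset_span_isCompactElement bad) hspan₀
  rw [span_le] at hT hB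
  obtain ⟨v₁, hv₁, hv₁B⟩ := Set.not_subset.1 hB
  have hUB : U ≤ B := (hj.le_or_le h𝓛.2.2.1 hU).resolve_right
    fun hTU => (Finset.mem_filter.1 hv₁).2 (hTU (hT hv₁))
  have hl' : l ∈ supported F F (ℬ ∩ (T \ B) ∪ B) := by
    intro v hv
    by_cases hvB : v ∈ B
    · exact .inr hvB
    · have hvbad : v ∈ bad := Finset.mem_filter.2 ⟨hv, fun hvU => hvB (hUB hvU)⟩
      exact .inl ⟨hl hv, hT hvbad, hvB⟩
  exact hv₁B (mem_supported_of_linearIndepOn_mkQ (hℬ B T hj) hl' (hUB hlU)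
    (Finset.mem_filter.1 hv₁).1)

theorem IsSeries.linearIndepOn_mkQ_diff (h𝓛 : IsSeries 𝓛)
    (hℬ : ∀ B T, IsJump 𝓛 B T → LinearIndepOn F B.mkQ (ℬ ∩ (T \ B)))
    {U : Submodule F V} (hU : U ∈ 𝓛) : LinearIndepOn F U.mkQ (ℬ \ U) := by
  refine linearIndepOn_iff.2 fun l hl hl₀ => ?_
  rw [← apply_linearCombination_id, mkQ_apply, Quotient.mk_eq_zero] at hl₀
  have hlU := h𝓛.mem_supported_of_linearCombination_mem hℬ
    (supported_mono Set.sdiff_subset hl) hU hl₀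
  exact disjoint_def.1 (disjoint_supported_supported Set.disjoint_sdiff_left) l hl hlU

theorem IsSeries.span_inter_eq (h𝓛 : IsSeries 𝓛)
    (hℬ : ∀ B T, IsJump 𝓛 B T → LinearIndepOn F B.mkQ (ℬ ∩ (T \ B)))
    (hspan : span F ℬ = ⊤) {W : Submodule F V} (hW : W ∈ 𝓛) : span F (ℬ ∩ W) = W := by
  refine le_antisymm (span_le.2 Set.inter_subset_right) fun w hw => ?_
  have hwℬ : w ∈ span F (id '' ℬ) := by simp [hspan]
  obtain ⟨l, hl, rfl⟩ := (mem_span_image_iff_linearCombination F (v := id)).1 hwℬ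
  have hlW := h𝓛.mem_supported_of_linearCombination_mem hℬ hl hW hw
  have hlℬW : l ∈ supported F F (ℬ ∩ W) := by
    rw [supported_inter]
    exact ⟨hl, hlW⟩
  simpa using (mem_span_image_iff_linearCombination F (v := id)).2 ⟨l, hlℬW, rfl⟩

theorem Submodule.span_mkQ_image_diff {R M : Type*} [Ring R] [AddCommGroup M] [Module R M]
    (U : Submodule R M) (s : Set M) : span R (U.mkQ '' (s \ U)) = span R (U.mkQ '' s) := by
  refine le_antisymm (span_mono (Set.image_mono Set.sdiff_subset)) (span_le.2 ?_)
  rintro _ ⟨v, hv, rfl⟩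
  by_cases hvU : v ∈ U
  · rw [SetLike.mem_coe, mkQ_apply, (Quotient.mk_eq_zero U).2 hvU]
    exact zero_mem _
  · exact subset_span ⟨v, ⟨hv, hvU⟩, rfl⟩

end

theorem stmt10_general {F V : Type*} [Field F] [AddCommGroup V] [Module F V]
    (𝓛 : Set (Submodule F V)) (hser : IsSeries 𝓛)
    (ℬ : Set V)
    (hspan : Submodule.span F ℬ = ⊤)
    (hadapt : ∀ B T : Submodule F V, IsJump 𝓛 B T →
      LinearIndependent F
        (fun x : ↥(ℬ ∩ ((T : Set V) \ (B : Set V))) => B.mkQ (x : V)) ∧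
      Submodule.span F (B.mkQ '' (ℬ ∩ ((T : Set V) \ (B : Set V))))
        = T.map B.mkQ)
    (U W : Submodule F V) (hU : U ∈ 𝓛) (hW : W ∈ 𝓛) :
    LinearIndependent F
      (fun x : ↥(ℬ ∩ ((W : Set V) \ (U : Set V))) => U.mkQ (x : V)) ∧
    Submodule.span F (U.mkQ '' (ℬ ∩ ((W : Set V) \ (U : Set V))))
      = W.map U.mkQ := by
  have hℬ : ∀ B T, IsJump 𝓛 B T → LinearIndepOn F B.mkQ (ℬ ∩ (T \ B)) :=
    fun B T hj => (hadapt B T hj).1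
  refine ⟨(hser.linearIndepOn_mkQ_diff hℬ hU).mono fun v hv => ⟨hv.1, hv.2.2⟩, ?_⟩
  rw [← Set.inter_sdiff_assoc, Submodule.span_mkQ_image_diff, ← Submodule.map_span,
    hser.span_inter_eq hℬ hspan hW]

/-- Let `𝓑` be an `𝓛`-adapted basis of `V`: for each jump
`(B, T)` of `𝓛`, the image of `𝓑 ∩ (T \ B)` in `V/B` is a basis of `T/B`
(identified with the image of `T` in `V/B`).  Then for any `U < W` in `𝓛`,
the image of `𝓑 ∩ (W \ U)` in `V/U` is a basis of `W/U`. -/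
theorem stmt10 {F V : Type*} [Field F] [AddCommGroup V] [Module F V]
    (𝓛 : Set (Submodule F V)) (hser : IsSeries 𝓛)
    (ℬ : Set V)
    (hind : LinearIndependent F (fun v : ℬ => (v : V)))
    (hspan : Submodule.span F ℬ = ⊤)
    (hadapt : ∀ B T : Submodule F V, IsJump 𝓛 B T →
      LinearIndependent F
        (fun x : ↥(ℬ ∩ ((T : Set V) \ (B : Set V))) => B.mkQ (x : V)) ∧
      Submodule.span F (B.mkQ '' (ℬ ∩ ((T : Set V) \ (B : Set V))))
        = T.map B.mkQ)
    (U W : Submodule F V) (hU : U ∈ 𝓛) (hW : W ∈ 𝓛) (hUW : U < W) :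
    LinearIndependent F
      (fun x : ↥(ℬ ∩ ((W : Set V) \ (U : Set V))) => U.mkQ (x : V)) ∧
    Submodule.span F (U.mkQ '' (ℬ ∩ ((W : Set V) \ (U : Set V))))
      = W.map U.mkQ :=
  stmt10_general 𝓛 hser ℬ hspan hadapt U W hU hW
end

section
/- Let V be an F-vector space, 𝓛 a series in V, 𝓑 an 𝓛-adapted basis of V, and {W_λ/U_λ : λ ∈ Λ} a family of sections of 𝓛 (U_λ, W_λ ∈ 𝓛, U_λ < W_λ) that are pairwise 'disjoint' in the sense that for distinct α, β either W_β ≤ U_α or W_α ≤ U_β. Suppose for each λ we are given h_λ in the stability group of the series induced by 𝓛 on W_λ/U_λ. Then there exists h in the stability group S(𝓛) of 𝓛 such that for every λ, the map induced by h on W_λ/U_λ equals h_λ. -/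
section Defs

variable {F V : Type*} [Field F] [AddCommGroup V] [Module F V]

/-- The series induced by `𝓛` on the section `W/U` (realized as
`↥W ⧸ U.comap W.subtype`). -/
def inducedSeries (𝓛 : Set (Submodule F V)) (U W : Submodule F V) :
    Set (Submodule F (↥W ⧸ U.comap W.subtype)) :=
  {Y | ∃ X ∈ 𝓛, U ≤ X ∧ X ≤ W ∧
    Y = (X.comap W.subtype).map (U.comap W.subtype).mkQ}

end Defs

/-!
An `𝓛`-adapted basis `b` is compatible with every member `X` of `𝓛`: the coordinates of `x ∈ X`
are supported on basis vectors lying in `X`. (Otherwise take a basis vector of the support outside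
`X` whose jump `(B, T)` is highest; then `x ∈ B` and the whole support lies in `T`, so independence
of `b` modulo `B` kills its coefficient.) Hence the basis vectors in `W_λ \ U_λ` span a complement
`S_λ` of `U_λ` in `W_λ`, so `S_λ ≃ W_λ/U_λ`, and these sets are disjoint for distinct `λ`.
Let `g` act on each `S_λ` as `h_λ` transported along this isomorphism and fix the remaining basis
vectors. It is invertible blockwise and induces `h_λ`; it lies in `S(𝓛)` because, for a basis
vector `v ∈ S_λ`, applying `h_λ ∈ S(𝓛 on W_λ/U_λ)` to the image of the jump at which `v` appears
shows that `g v - v` lies in the bottom of that jump.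
-/

open Function Submodule

namespace Module.Basis

variable {ι Λ R M : Type*} [CommSemiring R] [AddCommMonoid M] [Module R M]
  (b : Basis ι R M) (s : Λ → Set ι)

open Classical in
noncomputable def blockConstr (e : ∀ l, span R (b '' s l) →ₗ[R] span R (b '' s l)) :
    M →ₗ[R] M :=
  b.constr R fun i =>
    if h : ∃ l, i ∈ s l then e h.choose ⟨b i, subset_span (Set.mem_image_of_mem b h.choose_spec)⟩
    else b i

variable {b s}

lemma blockConstr_apply_of_mem (hs : Pairwise (Disjoint on s))
    (e : ∀ l, span R (b '' s l) →ₗ[R] span R (b '' s l)) {l : Λ} (x : span R (b '' s l)) :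
    b.blockConstr s e x = e l x := by
  obtain ⟨x, hx⟩ := x
  induction hx using span_induction with
  | mem _ hy =>
    obtain ⟨i, hi, rfl⟩ := hy
    have hex : ∃ l, i ∈ s l := ⟨l, hi⟩
    have hchoose : hex.choose = l := by
      by_contra hne
      exact Set.disjoint_left.1 (hs hne) hex.choose_spec hi
    have heq : ∀ l' (hl' : i ∈ s l'), l' = l →
        (e l' ⟨b i, subset_span (Set.mem_image_of_mem b hl')⟩ : M) =
          e l ⟨b i, subset_span (Set.mem_image_of_mem b hi)⟩ := by
      rintro _ _ rfl; rfl
    rw [blockConstr, constr_basis, dif_pos hex]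
    exact heq _ hex.choose_spec hchoose
  | zero => exact (map_zero _).trans (congrArg Subtype.val (map_zero (e l))).symm
  | add x y hx hy ihx ihy =>
    rw [map_add, ihx, ihy, ← Submodule.coe_add, ← map_add]
    rfl
  | smul a x hx ihx =>
    rw [LinearMap.map_smul, ihx, ← Submodule.coe_smul, ← LinearMap.map_smul]
    rfl

lemma blockConstr_apply_of_notMem (e : ∀ l, span R (b '' s l) →ₗ[R] span R (b '' s l)) {i : ι}
    (hi : ∀ l, i ∉ s l) : b.blockConstr s e (b i) = b i := by
  rw [blockConstr, constr_basis, dif_neg (not_exists.2 hi)]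

lemma blockConstr_comp_blockConstr (hs : Pairwise (Disjoint on s))
    {e e' : ∀ l, span R (b '' s l) →ₗ[R] span R (b '' s l)} (he : ∀ l x, e l (e' l x) = x) :
    b.blockConstr s e ∘ₗ b.blockConstr s e' = LinearMap.id := by
  refine b.ext fun i => ?_
  by_cases hi : ∃ l, i ∈ s l
  · obtain ⟨l, hi⟩ := hi
    have hbi : b i ∈ span R (b '' s l) := subset_span (Set.mem_image_of_mem b hi)
    rw [LinearMap.comp_apply, blockConstr_apply_of_mem hs e' ⟨b i, hbi⟩,
      blockConstr_apply_of_mem hs e, he]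
    rfl
  · rw [not_exists] at hi
    rw [LinearMap.comp_apply, blockConstr_apply_of_notMem e' hi, blockConstr_apply_of_notMem e hi]
    rfl

theorem exists_linearEquiv_eq_on_blocks (hs : Pairwise (Disjoint on s))
    (e : ∀ l, span R (b '' s l) ≃ₗ[R] span R (b '' s l)) :
    ∃ g : M ≃ₗ[R] M, (∀ l (x : span R (b '' s l)), g x = e l x) ∧
      ∀ i, (∀ l, i ∉ s l) → g (b i) = b i := by
  let f := b.blockConstr s fun l => (e l).toLinearMap
  let f' := b.blockConstr s fun l => (e l).symm.toLinearMap
  refine ⟨.ofLinearMap f f' (blockConstr_comp_blockConstr hs fun l => (e l).apply_symm_apply)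
    (blockConstr_comp_blockConstr hs fun l => (e l).symm_apply_apply),
    fun l => blockConstr_apply_of_mem hs (fun l => (e l).toLinearMap),
    fun i => blockConstr_apply_of_notMem (fun l => (e l).toLinearMap)⟩

end Module.Basis

namespace Submodule

variable {R M : Type*} [Ring R] [AddCommGroup M] [Module R M] {S U W : Submodule R M}

noncomputable def equivQuotientOfIsComplIn (hSW : S ≤ W) (hSU : Disjoint S U) (hW : W ≤ S ⊔ U) :
    S ≃ₗ[R] W ⧸ U.comap W.subtype :=
  .ofBijective ((U.comap W.subtype).mkQ ∘ₗ inclusion hSW) ⟨by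
    rw [← LinearMap.ker_eq_bot, eq_bot_iff]
    intro x hx
    simp only [LinearMap.mem_ker, LinearMap.comp_apply, mkQ_apply, Quotient.mk_eq_zero,
      mem_comap, subtype_apply, coe_inclusion] at hx
    simpa using (disjoint_def.1 hSU) x x.2 hx, by
    rintro ⟨x⟩
    obtain ⟨y, hy, z, hz, hyz⟩ := mem_sup.1 (hW x.2)
    refine ⟨⟨y, hy⟩, (Quotient.eq _).2 ?_⟩
    simpa [← hyz] using hz⟩

lemma quotient_mk_apply_eq_of_le_sup (hSW : S ≤ W) (hW : W ≤ S ⊔ U) {f : M →ₗ[R] M}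
    (hfU : ∀ u ∈ U, f u ∈ U) (hfS : ∀ x ∈ S, f x ∈ W)
    {q : (W ⧸ U.comap W.subtype) →ₗ[R] (W ⧸ U.comap W.subtype)}
    (hq : ∀ (x : M) (hx : x ∈ S), Quotient.mk ⟨f x, hfS x hx⟩ = q (Quotient.mk ⟨x, hSW hx⟩))
    (x : W) (hx : f x ∈ W) : q (Quotient.mk x) = Quotient.mk ⟨f x, hx⟩ := by
  obtain ⟨y, hy, z, hz, hyz⟩ := mem_sup.1 (hW x.2)
  have hxy : (Quotient.mk x : W ⧸ U.comap W.subtype) = Quotient.mk ⟨y, hSW hy⟩ :=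
    (Quotient.eq _).2 (by simpa [← hyz] using hz)
  have hfxy : (Quotient.mk ⟨f x, hx⟩ : W ⧸ U.comap W.subtype) = Quotient.mk ⟨f y, hfS y hy⟩ :=
    (Quotient.eq _).2 (by simpa [← hyz] using hfU z hz)
  rw [hxy, hfxy, hq y hy]

end Submodule

section Jumps

variable {F V : Type*} [Field F] [AddCommGroup V] [Module F V] {𝓛 : Set (Submodule F V)}

/-- For `x ≠ 0` and a series `𝓛`, `(jumpBot 𝓛 x, jumpTop 𝓛 x)` is the jump of `𝓛` at which `x`
appears. -/
noncomputable def jumpTop (𝓛 : Set (Submodule F V)) (x : V) : Submodule F V :=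
  sInf {X | X ∈ 𝓛 ∧ x ∈ X}

noncomputable def jumpBot (𝓛 : Set (Submodule F V)) (x : V) : Submodule F V :=
  sSup {X | X ∈ 𝓛 ∧ x ∉ X}

lemma mem_jumpTop (x : V) : x ∈ jumpTop 𝓛 x := mem_sInf.2 fun _ hX => hX.2

lemma jumpTop_le {X : Submodule F V} (hX : X ∈ 𝓛) {x : V} (hx : x ∈ X) : jumpTop 𝓛 x ≤ X :=
  sInf_le ⟨hX, hx⟩

lemma le_jumpBot {X : Submodule F V} (hX : X ∈ 𝓛) {x : V} (hx : x ∉ X) : X ≤ jumpBot 𝓛 x :=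
  le_sSup ⟨hX, hx⟩

namespace IsSeries

lemma jumpTop_mem (hser : IsSeries 𝓛) (x : V) : jumpTop 𝓛 x ∈ 𝓛 :=
  (hser.2.2.2 {X | X ∈ 𝓛 ∧ x ∈ X} (fun _ hX => hX.1) ⟨⊤, hser.2.1, mem_top⟩).1

lemma jumpBot_mem (hser : IsSeries 𝓛) {x : V} (hx : x ≠ 0) : jumpBot 𝓛 x ∈ 𝓛 :=
  (hser.2.2.2 {X | X ∈ 𝓛 ∧ x ∉ X} (fun _ hX => hX.1) ⟨⊥, hser.1, by simpa using hx⟩).2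

lemma notMem_jumpBot (hser : IsSeries 𝓛) {x : V} (hx : x ≠ 0) : x ∉ jumpBot 𝓛 x := fun hmem => by
  have hchain : IsChain (· ≤ ·) {X | X ∈ 𝓛 ∧ x ∉ X} := hser.2.2.1.mono fun _ hX => hX.1
  obtain ⟨X, hX, hxX⟩ := (mem_sSup_of_directed (s := {X | X ∈ 𝓛 ∧ x ∉ X})
    ⟨⊥, hser.1, by simpa using hx⟩ hchain.directedOn).1 hmem
  exact hX.2 hxX

lemma jumpBot_lt_jumpTop (hser : IsSeries 𝓛) {x : V} (hx : x ≠ 0) : jumpBot 𝓛 x < jumpTop 𝓛 x := by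
  refine lt_of_le_of_ne (sSup_le fun X hX => ?_) fun h => hser.notMem_jumpBot hx (h ▸ mem_jumpTop x)
  exact (hser.2.2.1.total hX.1 (hser.jumpTop_mem x)).resolve_right fun h => hX.2 (h (mem_jumpTop x))

lemma isJump_jumpBot_jumpTop (hser : IsSeries 𝓛) {x : V} (hx : x ≠ 0) :
    IsJump 𝓛 (jumpBot 𝓛 x) (jumpTop 𝓛 x) := by
  refine ⟨hser.jumpBot_mem hx, hser.jumpTop_mem x, hser.jumpBot_lt_jumpTop hx, fun X hX _ _ => ?_⟩
  by_cases hxX : x ∈ X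
  · exact Or.inr (le_antisymm ‹_› (jumpTop_le hX hxX))
  · exact Or.inl (le_antisymm (le_jumpBot hX hxX) ‹_›)

lemma jumpBot_le (hser : IsSeries 𝓛) {X : Submodule F V} (hX : X ∈ 𝓛) {x : V} (hx : x ≠ 0)
    (hxX : x ∈ X) : jumpBot 𝓛 x ≤ X :=
  (hser.jumpBot_lt_jumpTop hx).le.trans (jumpTop_le hX hxX)

lemma jumpBot_le_of_isJump (hser : IsSeries 𝓛) {B T : Submodule F V} (hBT : IsJump 𝓛 B T)
    {x : V} (hx : x ≠ 0) (hxT : x ∈ T) : jumpBot 𝓛 x ≤ B := by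
  rcases hser.2.2.1.total (hser.jumpBot_mem hx) hBT.1 with hle | hge
  · exact hle
  · rcases hBT.2.2.2 _ (hser.jumpBot_mem hx) hge (hser.jumpBot_le hBT.2.1 hx hxT) with h | h
    · exact h.le
    · exact absurd (h ▸ hxT) (hser.notMem_jumpBot hx)

end IsSeries

end Jumps

lemma Submodule.mkQ_mem_map_mkQ_iff {R M : Type*} [Ring R] [AddCommGroup M] [Module R M]
    {p q : Submodule R M} (h : p ≤ q) {x : M} : p.mkQ x ∈ q.map p.mkQ ↔ x ∈ q := by
  rw [← mem_comap, comap_map_mkQ, sup_eq_right.2 h]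

namespace IsSeries

variable {F V : Type*} [Field F] [AddCommGroup V] [Module F V] {𝓛 : Set (Submodule F V)}

lemma apply_mem_of_mem_stab (hser : IsSeries 𝓛) {g : V ≃ₗ[F] V} (hg : g ∈ stab 𝓛)
    {X : Submodule F V} (hX : X ∈ 𝓛) {x : V} (hx : x ∈ X) : g x ∈ X := by
  by_cases hx0 : x = 0
  · simp [hx0]
  · have hgx := hg _ _ (hser.isJump_jumpBot_jumpTop hx0) x (mem_jumpTop x)
    simpa using add_mem (hser.jumpBot_le hX hx0 hx hgx) hx

lemma isJump_inducedSeries (hser : IsSeries 𝓛) {U W B T : Submodule F V} (hBT : IsJump 𝓛 B T)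
    (hUB : U ≤ B) (hTW : T ≤ W) :
    IsJump (inducedSeries 𝓛 U W) ((B.comap W.subtype).map (U.comap W.subtype).mkQ)
      ((T.comap W.subtype).map (U.comap W.subtype).mkQ) := by
  have hUT : U ≤ T := hUB.trans hBT.2.2.1.le
  refine ⟨⟨B, hBT.1, hUB, hBT.2.2.1.le.trans hTW, rfl⟩, ⟨T, hBT.2.1, hUT, hTW, rfl⟩, ?_, ?_⟩
  · obtain ⟨z, hzT, hzB⟩ := SetLike.exists_of_lt hBT.2.2.1
    refine SetLike.lt_iff_le_and_exists.2 ⟨map_mono (comap_mono hBT.2.2.1.le),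
      (U.comap W.subtype).mkQ ⟨z, hTW hzT⟩, ?_, ?_⟩
    · exact (mkQ_mem_map_mkQ_iff (comap_mono hUT)).2 hzT
    · exact fun hz => hzB ((mkQ_mem_map_mkQ_iff (comap_mono hUB)).1 hz)
  · rintro _ ⟨X, hX, -, -, rfl⟩ hBX hXT
    rcases hser.2.2.1.total hX hBT.1 with hXB | hBX'
    · exact Or.inl (le_antisymm (map_mono (comap_mono hXB)) hBX)
    rcases hser.2.2.1.total hX hBT.2.1 with hXT' | hTX
    · rcases hBT.2.2.2 X hX hBX' hXT' with rfl | rfl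
      · exact Or.inl rfl
      · exact Or.inr rfl
    · exact Or.inr (le_antisymm hXT (map_mono (comap_mono hTX)))

lemma sub_mem_jumpBot_of_mem_stab_inducedSeries (hser : IsSeries 𝓛) {U W : Submodule F V}
    (hU : U ∈ 𝓛) (hW : W ∈ 𝓛) {h : (W ⧸ U.comap W.subtype) ≃ₗ[F] (W ⧸ U.comap W.subtype)}
    (hh : h ∈ stab (inducedSeries 𝓛 U W)) {x y : W} (hxU : (x : V) ∉ U)
    (hy : Submodule.Quotient.mk y = h (Submodule.Quotient.mk x)) :
    (y : V) - x ∈ jumpBot 𝓛 (x : V) := by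
  have hx0 : (x : V) ≠ 0 := fun h0 => hxU (h0 ▸ U.zero_mem)
  have hUB : U ≤ jumpBot 𝓛 (x : V) := le_jumpBot hU hxU
  have hjump := hser.isJump_inducedSeries (hser.isJump_jumpBot_jumpTop hx0) hUB
    (jumpTop_le hW x.2)
  have hmem := hh _ _ hjump _ ((mkQ_mem_map_mkQ_iff (comap_mono (hUB.trans
    (hser.jumpBot_lt_jumpTop hx0).le))).2 (mem_jumpTop (x : V)))
  rw [mkQ_apply, ← hy, ← Submodule.Quotient.mk_sub, ← mkQ_apply,
    mkQ_mem_map_mkQ_iff (comap_mono hUB)] at hmem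
  exact hmem

end IsSeries

section AdaptedBasis

variable {F V ι : Type*} [Field F] [AddCommGroup V] [Module F V]

def Module.Basis.LinearIndepModJumps (b : Module.Basis ι F V) (𝓛 : Set (Submodule F V)) : Prop :=
  ∀ B T, IsJump 𝓛 B T → LinearIndepOn F (B.mkQ ∘ b) (b ⁻¹' ((T : Set V) \ B))

lemma Module.Basis.repr_eq_zero_of_linearIndepOn_mkQ (b : Module.Basis ι F V) {B T : Submodule F V}
    (hb : LinearIndepOn F (B.mkQ ∘ b) (b ⁻¹' ((T : Set V) \ B))) {x : V} (hxB : x ∈ B)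
    (hxT : ∀ j ∈ (b.repr x).support, b j ∈ T) {i : ι} (hi : b i ∈ (T : Set V) \ B) :
    b.repr x i = 0 := by
  classical
  set p : ι → Prop := (· ∈ b ⁻¹' ((T : Set V) \ B))
  have hrest : Finsupp.linearCombination F b ((b.repr x).filter fun j => ¬ p j) ∈ B := by
    refine span_le.2 (Set.image_preimage_subset b B)
      ((Finsupp.mem_span_image_iff_linearCombination F).2 ⟨_, ?_, rfl⟩)
    intro j hj
    rw [Finsupp.support_filter, Finset.coe_filter] at hj
    by_contra hjB
    exact hj.2 ⟨hxT j hj.1, hjB⟩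
  have hmain : Finsupp.linearCombination F (B.mkQ ∘ b) ((b.repr x).filter p) = 0 := by
    rw [← Finsupp.apply_linearCombination, mkQ_apply, Quotient.mk_eq_zero]
    have hsplit := congrArg (Finsupp.linearCombination F b) ((b.repr x).filter_add_filter_not p)
    rw [map_add, b.linearCombination_repr] at hsplit
    rw [eq_sub_of_add_eq hsplit]
    exact sub_mem hxB hrest
  have hzero := linearIndepOn_iff.1 hb _ (by
    rw [Finsupp.mem_supported, Finsupp.support_filter, Finset.coe_filter]
    exact fun j hj => hj.2) hmain
  simpa [Finsupp.filter_apply_pos p _ (show p i from hi)] using DFunLike.congr_fun hzero i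

namespace IsSeries

variable {𝓛 : Set (Submodule F V)}

lemma basis_mem_of_mem_support (hser : IsSeries 𝓛) (b : Module.Basis ι F V)
    (hb : b.LinearIndepModJumps 𝓛)
    {X : Submodule F V} (hX : X ∈ 𝓛) {x : V} (hx : x ∈ X) {i : ι}
    (hi : i ∈ (b.repr x).support) : b i ∈ X := by
  classical
  by_contra hiX
  obtain ⟨j, hjS, hjmax⟩ := Finset.exists_maximalFor (jumpTop 𝓛 ∘ b)
    ((b.repr x).support.filter (b · ∉ X)) ⟨i, Finset.mem_filter.2 ⟨hi, hiX⟩⟩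
  obtain ⟨hj, hjX⟩ := Finset.mem_filter.1 hjS
  have hXB : X ≤ jumpBot 𝓛 (b j) := le_jumpBot hX hjX
  have hT : ∀ k ∈ (b.repr x).support, b k ∈ jumpTop 𝓛 (b j) := by
    intro k hk
    by_cases hkX : b k ∈ X
    · exact (hser.jumpBot_lt_jumpTop (b.ne_zero j)).le (hXB hkX)
    · refine (hser.2.2.1.total (hser.jumpTop_mem (b k)) (hser.jumpTop_mem (b j))).elim
        (· (mem_jumpTop _)) fun hle => ?_
      exact hjmax (Finset.mem_filter.2 ⟨hk, hkX⟩) hle (mem_jumpTop _)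
  exact Finsupp.mem_support_iff.1 hj <| b.repr_eq_zero_of_linearIndepOn_mkQ
    (hb _ _ (hser.isJump_jumpBot_jumpTop (b.ne_zero j))) (hXB hx) hT
    ⟨mem_jumpTop _, hser.notMem_jumpBot (b.ne_zero j)⟩

variable {b : Module.Basis ι F V}

lemma le_span_basis (hser : IsSeries 𝓛)
    (hb : b.LinearIndepModJumps 𝓛)
    {X : Submodule F V} (hX : X ∈ 𝓛) : X ≤ span F (b '' (b ⁻¹' X)) :=
  fun x hx => span_mono (Set.image_mono fun _ hi => hser.basis_mem_of_mem_support b hb hX hx hi)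
      (b.mem_span_repr_support x)

lemma disjoint_span_basis_sdiff (hser : IsSeries 𝓛)
    (hb : b.LinearIndepModJumps 𝓛)
    (W : Submodule F V) {U : Submodule F V} (hU : U ∈ 𝓛) :
    Disjoint (span F (b '' (b ⁻¹' ((W : Set V) \ U)))) U := by
  refine disjoint_def.2 fun x hxS hxU => b.repr.map_eq_zero_iff.1 <| Finsupp.support_eq_empty.1 <|
    Finset.eq_empty_of_forall_notMem fun i hi => ?_
  exact (b.mem_span_image.1 hxS hi).2 (hser.basis_mem_of_mem_support b hb hU hxU hi)

lemma le_span_basis_sdiff_sup (hser : IsSeries 𝓛)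
    (hb : b.LinearIndepModJumps 𝓛)
    (U : Submodule F V) {W : Submodule F V} (hW : W ∈ 𝓛) :
    W ≤ span F (b '' (b ⁻¹' ((W : Set V) \ U))) ⊔ U := by
  refine (hser.le_span_basis hb hW).trans (span_le.2 ?_)
  rintro _ ⟨i, hi, rfl⟩
  by_cases hiU : b i ∈ U
  · exact mem_sup_right hiU
  · exact mem_sup_left (subset_span ⟨i, ⟨hi, hiU⟩, rfl⟩)

lemma mem_stab_of_basis (hser : IsSeries 𝓛)
    (hb : b.LinearIndepModJumps 𝓛)
    {g : V ≃ₗ[F] V} (hg : ∀ i, g (b i) - b i ∈ jumpBot 𝓛 (b i)) : g ∈ stab 𝓛 := by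
  intro B T hBT x hx
  have hrepr := b.linearCombination_repr x
  rw [Finsupp.linearCombination_apply] at hrepr
  have hsum : g x - x = (b.repr x).sum fun i a => a • (g (b i) - b i) := by
    conv_lhs => rw [← hrepr]
    simp [map_finsuppSum, smul_sub, Finsupp.sum_sub]
  rw [hsum]
  exact sum_mem fun i hi => smul_mem _ _ <| hser.jumpBot_le_of_isJump hBT (b.ne_zero i)
    (hser.basis_mem_of_mem_support b hb hBT.2.1 hx hi) (hg i)

end IsSeries

end AdaptedBasis

section Induces

variable {F V : Type*} [Field F] [AddCommGroup V] [Module F V]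

def InducesOn (g : V ≃ₗ[F] V) (U W : Submodule F V)
    (h : (W ⧸ U.comap W.subtype) ≃ₗ[F] (W ⧸ U.comap W.subtype)) : Prop :=
  (∀ x ∈ W, g x ∈ W) ∧ (∀ x ∈ U, g x ∈ U) ∧
    ∀ (x : W) (hx : g (x : V) ∈ W),
      h (Submodule.Quotient.mk x) = Submodule.Quotient.mk (⟨g x, hx⟩ : W)

lemma IsSeries.inducesOn_of_mem_stab {𝓛 : Set (Submodule F V)} (hser : IsSeries 𝓛)
    {g : V ≃ₗ[F] V} (hg : g ∈ stab 𝓛) {S U W : Submodule F V} (hU : U ∈ 𝓛) (hW : W ∈ 𝓛)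
    (hSW : S ≤ W) (hWS : W ≤ S ⊔ U) (hgS : ∀ x ∈ S, g x ∈ W)
    {h : (W ⧸ U.comap W.subtype) ≃ₗ[F] (W ⧸ U.comap W.subtype)}
    (hh : ∀ (x : V) (hx : x ∈ S),
      Submodule.Quotient.mk ⟨g x, hgS x hx⟩ = h (Submodule.Quotient.mk ⟨x, hSW hx⟩)) :
    InducesOn g U W h :=
  ⟨fun _ => hser.apply_mem_of_mem_stab hg hW, fun _ => hser.apply_mem_of_mem_stab hg hU,
    quotient_mk_apply_eq_of_le_sup hSW hWS (f := g.toLinearMap)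
      (fun _ => hser.apply_mem_of_mem_stab hg hU) hgS hh⟩

theorem IsSeries.exists_mem_stab_forall_inducesOn {ι : Type*} {𝓛 : Set (Submodule F V)}
    (hser : IsSeries 𝓛) (b : Module.Basis ι F V)
    (hb : b.LinearIndepModJumps 𝓛)
    {Λ : Type*} (U W : Λ → Submodule F V) (hU : ∀ l, U l ∈ 𝓛) (hW : ∀ l, W l ∈ 𝓛)
    (hdisj : ∀ a b : Λ, a ≠ b → W b ≤ U a ∨ W a ≤ U b)
    (h : ∀ l, (W l ⧸ (U l).comap (W l).subtype) ≃ₗ[F] (W l ⧸ (U l).comap (W l).subtype))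
    (hstab : ∀ l, h l ∈ stab (inducedSeries 𝓛 (U l) (W l))) :
    ∃ g ∈ stab 𝓛, ∀ l, InducesOn g (U l) (W l) (h l) := by
  let s : Λ → Set ι := fun l => b ⁻¹' ((W l : Set V) \ U l)
  have hs : Pairwise (Disjoint on s) := fun l l' hne => Set.disjoint_left.2
    fun i hi hi' => (hdisj l l' hne).elim (fun h => hi.2 (h hi'.1)) fun h => hi'.2 (h hi.1)
  have hSW : ∀ l, span F (b '' s l) ≤ W l := fun l => span_le.2 fun _ ⟨_, hi, hx⟩ => hx ▸ hi.1
  let π l := equivQuotientOfIsComplIn (hSW l) (hser.disjoint_span_basis_sdiff hb (W l) (hU l))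
    (hser.le_span_basis_sdiff_sup hb (U l) (hW l))
  obtain ⟨g, hgS, hgb⟩ := b.exists_linearEquiv_eq_on_blocks hs
    fun l => (π l).trans ((h l).trans (π l).symm)
  have hgW : ∀ l, ∀ x ∈ span F (b '' s l), g x ∈ W l := fun l x hx =>
    (hgS l ⟨x, hx⟩).symm ▸ hSW l (Subtype.property _)
  have hgπ : ∀ l x (hx : x ∈ span F (b '' s l)),
      Submodule.Quotient.mk ⟨g x, hgW l x hx⟩ = h l (Submodule.Quotient.mk ⟨x, hSW l hx⟩) := by
    intro l x hx
    rw [← (π l).apply_symm_apply (h l _)]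
    exact congrArg Submodule.Quotient.mk (Subtype.ext (hgS l ⟨x, hx⟩))
  have hgstab : g ∈ stab 𝓛 := by
    refine hser.mem_stab_of_basis hb fun i => ?_
    by_cases hi : ∃ l, i ∈ s l
    · obtain ⟨l, hi⟩ := hi
      have hbi : b i ∈ span F (b '' s l) := subset_span (Set.mem_image_of_mem b hi)
      exact hser.sub_mem_jumpBot_of_mem_stab_inducedSeries (hU l) (hW l) (hstab l)
        (x := ⟨b i, hi.1⟩) hi.2 (hgπ l _ hbi)
    · simp [hgb i (not_exists.1 hi)]
  exact ⟨g, hgstab, fun l => hser.inducesOn_of_mem_stab hgstab (hU l) (hW l) (hSW l)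
    (hser.le_span_basis_sdiff_sup hb (U l) (hW l)) (hgW l) (hgπ l)⟩

end Induces

theorem stmt12_general {F V : Type*} [Field F] [AddCommGroup V] [Module F V]
    (𝓛 : Set (Submodule F V)) (hser : IsSeries 𝓛)
    (ℬ : Set V)
    (hindep : LinearIndependent F (fun v : ℬ => (v : V)))
    (hspan : Submodule.span F ℬ = ⊤)
    (hadapt : ∀ B T : Submodule F V, IsJump 𝓛 B T →
      LinearIndependent F
        (fun x : ↥(ℬ ∩ ((T : Set V) \ (B : Set V))) => B.mkQ (x : V)) ∧
      Submodule.span F (B.mkQ '' (ℬ ∩ ((T : Set V) \ (B : Set V))))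
        = T.map B.mkQ)
    {Λ : Type*} (U W : Λ → Submodule F V)
    (hU : ∀ l, U l ∈ 𝓛) (hW : ∀ l, W l ∈ 𝓛)
    (hdisj : ∀ a b : Λ, a ≠ b → W b ≤ U a ∨ W a ≤ U b)
    (h : ∀ l : Λ,
      (↥(W l) ⧸ (U l).comap (W l).subtype) ≃ₗ[F]
        (↥(W l) ⧸ (U l).comap (W l).subtype))
    (hstab : ∀ l : Λ, h l ∈ stab (inducedSeries 𝓛 (U l) (W l))) :
    ∃ g : V ≃ₗ[F] V, g ∈ stab 𝓛 ∧
      ∀ l : Λ,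
        (∀ x ∈ W l, g x ∈ W l) ∧ (∀ x ∈ U l, g x ∈ U l) ∧
        ∀ (x : ↥(W l)) (hx : g (x : V) ∈ W l),
          (h l) (Submodule.Quotient.mk x) =
            Submodule.Quotient.mk (⟨g (x : V), hx⟩ : ↥(W l)) := by
  refine hser.exists_mem_stab_forall_inducesOn (.mk hindep (by rw [Subtype.range_coe, hspan]))
    (fun B T hBT => ?_) U W hU hW hdisj h hstab
  rw [Module.Basis.coe_mk]
  refine LinearIndepOn.comp_of_image ?_ Subtype.val_injective.injOn
  rw [Subtype.image_preimage_coe]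
  exact (hadapt B T hBT).1

/-- Let `𝓑` be an `𝓛`-adapted basis of `V` and
`{W_λ/U_λ : λ ∈ Λ}` a family of pairwise disjoint sections of `𝓛`.  Given, for
each `λ`, an element `h_λ` of the stability group of the series induced by `𝓛`
on `W_λ/U_λ`, there exists `h ∈ S(𝓛)` inducing `h_λ` on `W_λ/U_λ` for every `λ`. -/
theorem stmt12 {F V : Type*} [Field F] [AddCommGroup V] [Module F V]
    (𝓛 : Set (Submodule F V)) (hser : IsSeries 𝓛)
    (ℬ : Set V)
    (hindep : LinearIndependent F (fun v : ℬ => (v : V)))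
    (hspan : Submodule.span F ℬ = ⊤)
    (hadapt : ∀ B T : Submodule F V, IsJump 𝓛 B T →
      LinearIndependent F
        (fun x : ↥(ℬ ∩ ((T : Set V) \ (B : Set V))) => B.mkQ (x : V)) ∧
      Submodule.span F (B.mkQ '' (ℬ ∩ ((T : Set V) \ (B : Set V))))
        = T.map B.mkQ)
    {Λ : Type*} (U W : Λ → Submodule F V)
    (hU : ∀ l, U l ∈ 𝓛) (hW : ∀ l, W l ∈ 𝓛) (hUW : ∀ l, U l < W l)
    (hdisj : ∀ a b : Λ, a ≠ b → W b ≤ U a ∨ W a ≤ U b)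
    (h : ∀ l : Λ,
      (↥(W l) ⧸ (U l).comap (W l).subtype) ≃ₗ[F]
        (↥(W l) ⧸ (U l).comap (W l).subtype))
    (hstab : ∀ l : Λ, h l ∈ stab (inducedSeries 𝓛 (U l) (W l))) :
    ∃ g : V ≃ₗ[F] V, g ∈ stab 𝓛 ∧
      ∀ l : Λ,
        (∀ x ∈ W l, g x ∈ W l) ∧ (∀ x ∈ U l, g x ∈ U l) ∧
        ∀ (x : ↥(W l)) (hx : g (x : V) ∈ W l),
          (h l) (Submodule.Quotient.mk x) =
            Submodule.Quotient.mk (⟨g (x : V), hx⟩ : ↥(W l)) :=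
  stmt12_general 𝓛 hser ℬ hindep hspan hadapt U W hU hW hdisj h hstab
end

section
/- Let G ≤ GL(V) for an F-vector space V, and suppose that for each g ∈ G there exists n = n(g) ∈ ℕ with [V,_n g^G] = 0, where g^G is the normal closure (conjugacy class closure) of g in G and [V,_n S] denotes the n-fold iterated commutator subspace spanned by (s_1−1)⋯(s_n−1)V over s_i ∈ S. Then there exists a series 𝓛 in V (a chain of subspaces containing 0 and V closed under unions and intersections) such that G is contained in the stability group S(𝓛), i.e. G acts trivially on every jump quotient of 𝓛. -/
section Defs

variable {F V : Type*} [Field F] [AddCommGroup V] [Module F V]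

/-- The commutator subspace `[M, S] = span{(s-1)m : m ∈ M, s ∈ S}`. -/
def commSp (S : Set (V ≃ₗ[F] V)) (M : Submodule F V) : Submodule F V :=
  Submodule.span F {x : V | ∃ m ∈ M, ∃ s ∈ S, x = s m - m}

/-- The iterated commutator subspace `[V,_n S]`. -/
def itCommSp (S : Set (V ≃ₗ[F] V)) : ℕ → Submodule F V
  | 0 => ⊤
  | n + 1 => commSp S (itCommSp S n)

end Defs


section Aux

variable {F V : Type*} [Field F] [AddCommGroup V] [Module F V]

theorem commSp_mono' (S : Set (V ≃ₗ[F] V)) {M N : Submodule F V} (h : M ≤ N) :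
    commSp S M ≤ commSp S N := by
  apply Submodule.span_mono
  rintro x ⟨m, hm, s, hs, rfl⟩
  exact ⟨m, h hm, s, hs, rfl⟩

theorem commSp_le_self' (S : Set (V ≃ₗ[F] V)) {M : Submodule F V}
    (hM : ∀ s ∈ S, ∀ x ∈ M, s x ∈ M) : commSp S M ≤ M := by
  rw [commSp, Submodule.span_le]
  rintro x ⟨m, hm, s, hs, rfl⟩
  exact sub_mem (hM s hs m hm) hm

theorem commSp_sup_le' (S : Set (V ≃ₗ[F] V)) (M N : Submodule F V) :
    commSp S (M ⊔ N) ≤ commSp S M ⊔ commSp S N := by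
  rw [commSp, Submodule.span_le]
  rintro x ⟨m, hm, s, hs, rfl⟩
  obtain ⟨a, ha, b, hb, rfl⟩ := Submodule.mem_sup.mp hm
  have : s (a + b) - (a + b) = (s a - a) + (s b - b) := by
    rw [map_add]; abel
  rw [this]
  exact add_mem (Submodule.mem_sup_left (Submodule.subset_span ⟨a, ha, s, hs, rfl⟩))
    (Submodule.mem_sup_right (Submodule.subset_span ⟨b, hb, s, hs, rfl⟩))

end Aux

/-- If `G ≤ GL(V)` is such that for every `g ∈ G` there is `n`
with `[V,_n g^G] = 0` (where `g^G` is the conjugacy class of `g` in `G`), then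
there is a series `𝓛` in `V` with `G ⊆ S(𝓛)`. -/
theorem stmt15 {F V : Type*} [Field F] [AddCommGroup V] [Module F V]
    (G : Subgroup (V ≃ₗ[F] V))
    (h : ∀ g ∈ G, ∃ n : ℕ,
      itCommSp {c : V ≃ₗ[F] V | ∃ x ∈ G, c = x⁻¹ * g * x} n = ⊥) :
    ∃ 𝓛 : Set (Submodule F V), IsSeries 𝓛 ∧ ∀ g ∈ G, g ∈ stab 𝓛 := by
  classical
  -- the set of G-invariant submodules
  set inv : Set (Submodule F V) := {M | ∀ g ∈ G, ∀ x ∈ M, g x ∈ M} with hinv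
  -- Zorn: a maximal chain of invariant submodules
  have hzorn : ∃ m, ({⊥, ⊤} : Set (Submodule F V)) ⊆ m ∧
      Maximal (fun c => c ⊆ inv ∧ IsChain (· ≤ ·) c) m := by
    obtain ⟨m, hm1, hm2⟩ := zorn_subset_nonempty
      {c : Set (Submodule F V) | c ⊆ inv ∧ IsChain (· ≤ ·) c}
      (fun c hc hchain _ => ⟨⋃₀ c, ⟨fun M hM => by
          obtain ⟨d, hd, hMd⟩ := hM; exact (hc hd).1 hMd,
        fun M hM N hN hMN => by
          obtain ⟨d, hd, hMd⟩ := hM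
          obtain ⟨e, he, hNe⟩ := hN
          rcases hchain.total hd he with hde | hed
          · exact (hc he).2 (hde hMd) hNe hMN
          · exact (hc hd).2 hMd (hed hNe) hMN⟩,
        fun s hs => Set.subset_sUnion_of_mem hs⟩)
      {⊥, ⊤}
      ⟨by rintro M (rfl | rfl)
          · intro g _ x hx; simp_all
          · intro g _ x _; trivial,
        by intro M hM N hN _
           rcases hM with rfl | rfl
           · left; exact bot_le
           · right; exact le_top⟩
    exact ⟨m, hm1, hm2⟩
  obtain ⟨𝓛, hbt, hmax⟩ := hzorn
  have h𝓛inv : 𝓛 ⊆ inv := hmax.1.1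
  have hchain : IsChain (· ≤ ·) 𝓛 := hmax.1.2
  -- key maximality principle: any invariant submodule comparable to all of 𝓛 is in 𝓛
  have hins : ∀ M : Submodule F V, M ∈ inv →
      (∀ U ∈ 𝓛, U ≤ M ∨ M ≤ U) → M ∈ 𝓛 := by
    intro M hMinv hcomp
    have : insert M 𝓛 ⊆ inv ∧ IsChain (· ≤ ·) (insert M 𝓛) := by
      refine ⟨Set.insert_subset hMinv h𝓛inv, ?_⟩
      intro A hA B hB hAB
      rcases hA with rfl | hA
      · rcases hB with rfl | hB
        · exact absurd rfl hAB
        · exact (hcomp B hB).symm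
      · rcases hB with rfl | hB
        · exact hcomp A hA
        · exact hchain hA hB hAB
    have := hmax.2 this (Set.subset_insert M 𝓛)
    exact this (Set.mem_insert M 𝓛)
  refine ⟨𝓛, ⟨hbt (by simp), hbt (by simp), hchain, ?_⟩, ?_⟩
  · -- closure under sInf and sSup
    intro 𝓕 h𝓕 hne
    have hdir : DirectedOn (· ≤ ·) 𝓕 := (hchain.mono h𝓕).directedOn
    constructor
    · apply hins
      · intro g hg x hx
        simp only [Submodule.mem_sInf] at hx ⊢
        exact fun M hM => h𝓛inv (h𝓕 hM) g hg x (hx M hM)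
      · intro U hU
        by_cases hc : ∀ M ∈ 𝓕, U ≤ M
        · exact Or.inl (le_sInf hc)
        · push_neg at hc
          obtain ⟨M, hM, hUM⟩ := hc
          rcases hchain.total hU (h𝓕 hM) with h1 | h1
          · exact absurd h1 hUM
          · exact Or.inr (le_trans (sInf_le hM) h1)
    · apply hins
      · intro g hg x hx
        obtain ⟨M, hM, hxM⟩ := (Submodule.mem_sSup_of_directed hne hdir).mp hx
        exact le_sSup hM (h𝓛inv (h𝓕 hM) g hg x hxM)
      · intro U hU
        by_cases hc : ∀ M ∈ 𝓕, M ≤ U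
        · exact Or.inr (sSup_le hc)
        · push_neg at hc
          obtain ⟨M, hM, hMU⟩ := hc
          rcases hchain.total (h𝓕 hM) hU with h1 | h1
          · exact absurd h1 hMU
          · exact Or.inl (le_trans h1 (le_sSup hM))
  · -- stability
    intro g hg B T hjump x hx
    obtain ⟨hB, hT, hBT, hj⟩ := hjump
    obtain ⟨n, hn⟩ := h g hg
    set S : Set (V ≃ₗ[F] V) := {c : V ≃ₗ[F] V | ∃ x ∈ G, c = x⁻¹ * g * x} with hS
    have hSG : ∀ s ∈ S, s ∈ G := by
      rintro s ⟨y, hy, rfl⟩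
      exact G.mul_mem (G.mul_mem (G.inv_mem hy) hg) hy
    have hSconj : ∀ g₀ ∈ G, ∀ s ∈ S, g₀ * s * g₀⁻¹ ∈ S := by
      rintro g₀ hg₀ s ⟨y, hy, rfl⟩
      refine ⟨y * g₀⁻¹, G.mul_mem hy (G.inv_mem hg₀), ?_⟩
      group
    -- invariance of commSp
    have hcomm_inv : ∀ M : Submodule F V, M ∈ inv → commSp S M ∈ inv := by
      intro M hM g₀ hg₀ x hx
      induction hx using Submodule.span_induction with
      | mem x hxgen =>
        obtain ⟨m, hm, s, hs, rfl⟩ := hxgen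
        have : g₀ (s m - m) = (g₀ * s * g₀⁻¹) (g₀ m) - g₀ m := by
          show g₀ (s m - m) = g₀ (s (g₀⁻¹ (g₀ m))) - g₀ m
          rw [show g₀⁻¹ (g₀ m) = m from g₀.symm_apply_apply m, map_sub]
        rw [this]
        exact Submodule.subset_span ⟨g₀ m, hM g₀ hg₀ m hm, _, hSconj g₀ hg₀ s hs, rfl⟩
      | zero => simpa using (commSp S M).zero_mem
      | add a b _ _ ha hb => rw [map_add]; exact add_mem ha hb
      | smul c a _ ha => rw [map_smul]; exact Submodule.smul_mem _ c ha
    have hT_inv : T ∈ inv := h𝓛inv hT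
    have hB_inv : B ∈ inv := h𝓛inv hB
    -- the iterated commutators D k = (commSp S)^[k] T
    set D : ℕ → Submodule F V := fun k => (commSp S)^[k] T with hD
    have hDsucc : ∀ k, D (k + 1) = commSp S (D k) := by
      intro k; simp [hD, Function.iterate_succ_apply']
    have hDinv : ∀ k, D k ∈ inv := by
      intro k; induction k with
      | zero => exact hT_inv
      | succ k ih => rw [hDsucc]; exact hcomm_inv _ ih
    have hDle : ∀ k, D k ≤ T := by
      intro k; induction k with
      | zero => exact le_rfl
      | succ k ih =>
        rw [hDsucc]
        exact le_trans (commSp_mono' S ih)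
          (commSp_le_self' S (fun s hs => hT_inv s (hSG s hs)))
    have hDit : ∀ k, D k ≤ itCommSp S k := by
      intro k; induction k with
      | zero => exact le_top
      | succ k ih => rw [hDsucc]; exact commSp_mono' S ih
    -- dichotomy for B ⊔ D 1
    have hBD1 : B ⊔ D 1 = B ∨ B ⊔ D 1 = T := by
      apply hj
      · apply hins
        · intro g₀ hg₀ y hy
          obtain ⟨a, ha, b, hb, rfl⟩ := Submodule.mem_sup.mp hy
          rw [map_add]
          exact Submodule.add_mem_sup (hB_inv g₀ hg₀ a ha) (hDinv 1 g₀ hg₀ b hb)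
        · intro U hU
          rcases hchain.total hU hB with h1 | h1
          · exact Or.inl (le_trans h1 le_sup_left)
          · rcases hchain.total hU hT with h2 | h2
            · rcases hj U hU h1 h2 with rfl | rfl
              · exact Or.inl le_sup_left
              · exact Or.inr (sup_le hBT.le (hDle 1))
            · exact Or.inr (le_trans (sup_le hBT.le (hDle 1)) h2)
      · exact le_sup_left
      · exact sup_le hBT.le (hDle 1)
    rcases hBD1 with hcase | hcase
    · -- [T, g^G] ≤ B, so g x - x ∈ B
      have : g x - x ∈ D 1 := by
        rw [hDsucc 0]
        exact Submodule.subset_span ⟨x, hx, g, ⟨1, G.one_mem, by group⟩, rfl⟩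
      exact (le_trans le_sup_right hcase.le : D 1 ≤ B) this
    · -- impossible case: B ⊔ D k = T for all k ≥ 1, contradicting nilpotency
      exfalso
      have hall : ∀ k, B ⊔ D (k + 1) = T := by
        intro k; induction k with
        | zero => exact hcase
        | succ k ih =>
          apply le_antisymm (sup_le hBT.le (hDle _))
          have h1 : D 1 = commSp S (B ⊔ D (k + 1)) := by rw [ih, hDsucc 0]; rfl
          have h2 : commSp S (B ⊔ D (k + 1)) ≤ B ⊔ D (k + 2) := by
            refine le_trans (commSp_sup_le' S B (D (k+1))) (sup_le ?_ ?_)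
            · exact le_trans (commSp_le_self' S (fun s hs => hB_inv s (hSG s hs)))
                le_sup_left
            · rw [hDsucc (k+1)]; exact le_sup_right
          calc T = B ⊔ D 1 := hcase.symm
            _ ≤ B ⊔ (B ⊔ D (k + 2)) := sup_le_sup_left (h1 ▸ h2) B
            _ = B ⊔ D (k + 2) := by rw [← sup_assoc, sup_idem]
      have hDn : D (n + 1) = ⊥ :=
        le_bot_iff.mp (le_trans (hDit (n+1)) (by
          rw [show itCommSp S (n+1) = commSp S (itCommSp S n) from rfl, hn]
          exact commSp_le_self' S (fun s _ x hx => by simpa using hx)))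
      have hfin := hall n
      rw [hDn, sup_bot_eq] at hfin
      exact hBT.ne hfin
end
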